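/- arXiv:2208.03751 — 11 statements merged into one kernel-verified Lean document; each statement's English description precedes it below -/
import Mathlib

section
/- Let R be a commutative Noetherian ring and I an ideal of R such that Ann(I) is an essential ideal of R. Then I is nilpotent. -/
/-- An ideal is essential if it intersects every nonzero ideal nontrivially. -/
def IsEssentialIdeal (R : Type*) [CommRing R] (E : Ideal R) : Prop :=
  ∀ J : Ideal R, J ≠ ⊥ → E ⊓ J ≠ ⊥

theorem nilpotent_of_annihilator_essential {R : Type*} [CommRing R] [IsNoetherianRing R]
    (I : Ideal R) (h : IsEssentialIdeal R (Submodule.annihilator I)) :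
    ∃ t : ℕ, 0 < t ∧ I ^ t = ⊥ := by
  have hle : I ≤ nilradical R := by
    intro a ha
    rw [mem_nilradical]
    by_contra hnil
    have hmono : Monotone fun n => LinearMap.ker (LinearMap.mulLeft R (a ^ n)) := by
      intro m n hmn r hr
      obtain ⟨k, rfl⟩ := Nat.exists_eq_add_of_le hmn
      simp only [LinearMap.mem_ker, LinearMap.mulLeft_apply] at hr ⊢
      rw [pow_add, mul_right_comm, hr, zero_mul]
    obtain ⟨n, hn⟩ := monotone_stabilizes_iff_noetherian.mpr inferInstance
      (⟨_, hmono⟩ : ℕ →o Submodule R R)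
    have hane : Ideal.span {a ^ n} ≠ ⊥ := by
      rw [Ne, Ideal.span_singleton_eq_bot]
      exact fun h0 => hnil ⟨n, h0⟩
    obtain ⟨x, hxmem, hxne⟩ := Submodule.exists_mem_ne_zero_of_ne_bot (h _ hane)
    obtain ⟨r, rfl⟩ := Ideal.mem_span_singleton.mp hxmem.2
    have hxa : a ^ (n + 1) * r = 0 := by
      have h0 := Submodule.mem_annihilator.mp hxmem.1 a ha
      have h1 : a ^ n * r * a = 0 := by simpa [smul_eq_mul] using h0
      calc a ^ (n + 1) * r = a ^ n * r * a := by ring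
        _ = 0 := h1
    have hr1 : r ∈ LinearMap.ker (LinearMap.mulLeft R (a ^ (n + 1))) := by
      simpa [LinearMap.mem_ker] using hxa
    have hr0 : r ∈ LinearMap.ker (LinearMap.mulLeft R (a ^ n)) := by
      have heq := hn (n + 1) (Nat.le_succ n)
      simp only [OrderHom.coe_mk] at heq
      rw [heq]
      exact hr1
    simp only [LinearMap.mem_ker, LinearMap.mulLeft_apply] at hr0
    exact hxne hr0
  have hfg : (Ideal.radical (⊥ : Ideal R)).FG := IsNoetherian.noetherian _
  obtain ⟨n, hn⟩ := Ideal.exists_radical_pow_le_of_fg (⊥ : Ideal R) hfg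
  have hnil : nilradical R ^ n ≤ ⊥ := by
    simpa [nilradical, Ideal.zero_eq_bot] using hn
  refine ⟨n + 1, Nat.succ_pos n, le_bot_iff.mp ?_⟩
  calc I ^ (n + 1) ≤ nilradical R ^ (n + 1) := Ideal.pow_right_mono hle _
    _ ≤ nilradical R ^ n := Ideal.pow_le_pow_right (Nat.le_succ n)
    _ ≤ ⊥ := hnil
end

section
/- Let R be a commutative Noetherian ring and x ∈ R such that Ann(x) is an essential ideal of R. Then x is nilpotent. -/
private lemma mem_ann_span_singleton {R : Type*} [CommRing R] (g r : R) :
    r ∈ Submodule.annihilator (Ideal.span {g}) ↔ r * g = 0 := by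
  rw [Submodule.mem_annihilator]
  constructor
  · intro hr; simpa [smul_eq_mul] using hr g (Ideal.subset_span rfl)
  · intro hr y hy
    rw [Ideal.mem_span_singleton] at hy
    obtain ⟨a, rfl⟩ := hy
    simp [smul_eq_mul, ← mul_assoc, hr]

theorem isNilpotent_of_annihilator_essential {R : Type*} [CommRing R] [IsNoetherianRing R]
    (x : R) (h : IsEssentialIdeal R (Submodule.annihilator (Ideal.span {x}))) :
    IsNilpotent x := by
  -- the ascending chain of annihilators of powers of x
  set f : ℕ →o Ideal R :=
    ⟨fun n => Submodule.annihilator (Ideal.span {x ^ n}), by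
      intro m n hmn
      intro r hr
      rw [mem_ann_span_singleton] at hr ⊢
      obtain ⟨k, rfl⟩ := Nat.exists_eq_add_of_le hmn
      calc r * (x ^ (m + k)) = (r * x ^ m) * x ^ k := by ring
        _ = 0 := by rw [hr, zero_mul]⟩ with hf
  obtain ⟨n, hn⟩ := monotone_stabilizes_iff_noetherian.mpr ‹IsNoetherianRing R› f
  have key : Submodule.annihilator (Ideal.span {x}) ⊓ Ideal.span {x ^ n} = ⊥ := by
    rw [eq_bot_iff]
    rintro r ⟨hr1, hr2⟩
    simp only [SetLike.mem_coe] at hr1 hr2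
    rw [mem_ann_span_singleton] at hr1
    rw [Ideal.mem_span_singleton] at hr2
    obtain ⟨a, rfl⟩ := hr2
    have ha : a ∈ f (n + 1) := by
      show a ∈ Submodule.annihilator (Ideal.span {x ^ (n + 1)})
      rw [mem_ann_span_singleton]
      calc a * x ^ (n + 1) = x ^ n * a * x := by ring
        _ = 0 := hr1
    have ha' : a ∈ f n := by rw [hn (n + 1) (Nat.le_succ n)]; exact ha
    have : a * x ^ n = 0 := (mem_ann_span_singleton _ _).mp ha'
    show (x ^ n * a : R) ∈ (⊥ : Ideal R)
    simp [mul_comm, this]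
  have hspan : Ideal.span {x ^ n} = ⊥ := by
    by_contra hne
    exact h _ hne key
  exact ⟨n, by simpa [Ideal.span_singleton_eq_bot] using hspan⟩
end

section
/- Let R be a commutative Noetherian ring with minimal primes p_1, ..., p_n (n ≥ 2), and for each i let q_i be the product of all minimal primes except p_i. Then for all i ≠ j, the annihilator Ann(q_i q_j) is an essential ideal of R. -/
namespace Ideal

variable {R : Type*}

theorem exists_pow_mul_ne_bot_and_pow_succ_mul_eq_bot [CommSemiring R] {N J : Ideal R}
    (hJ : J ≠ ⊥) {k : ℕ} (hk : N ^ k * J = ⊥) : ∃ m, N ^ m * J ≠ ⊥ ∧ N ^ (m + 1) * J = ⊥ := by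
  induction k with
  | zero => exact absurd (by simpa using hk) hJ
  | succ k ih =>
    by_cases hkJ : N ^ k * J = ⊥
    · exact ih hkJ
    · exact ⟨k, hkJ, hk⟩

theorem isEssentialIdeal_annihilator_of_isNilpotent [CommRing R] {N : Ideal R}
    (hN : IsNilpotent N) : IsEssentialIdeal R N.annihilator := by
  obtain ⟨k, hk⟩ := hN
  intro J hJ
  obtain ⟨m, hm, hm₁⟩ :=
    exists_pow_mul_ne_bot_and_pow_succ_mul_eq_bot hJ (by rw [hk, zero_mul, zero_eq_bot])
  refine ne_bot_of_le_ne_bot hm (le_inf ?_ mul_le_right)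
  rw [Submodule.le_annihilator_iff, smul_eq_mul, mul_right_comm, ← pow_succ, hm₁]

theorem isNilpotent_of_le_nilradical [CommSemiring R] [IsNoetherianRing R] {N : Ideal R}
    (hN : N ≤ nilradical R) : IsNilpotent N := by
  obtain ⟨k, hk⟩ := IsNoetherianRing.isNilpotent_nilradical R
  exact ⟨k, le_bot_iff.mp <| (pow_right_mono hN k).trans hk.le⟩

theorem le_nilradical_of_forall_minimalPrimes [CommSemiring R] {N : Ideal R}
    (h : ∀ P ∈ minimalPrimes R, N ≤ P) : N ≤ nilradical R := by
  rw [nilradical, ← sInf_minimalPrimes]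
  exact le_sInf h

theorem prod_erase_le {ι : Type*} [CommSemiring R] [DecidableEq ι] {s : Finset ι}
    (p : ι → Ideal R) {i k : ι} (hk : k ∈ s) (hki : k ≠ i) : ∏ j ∈ s.erase i, p j ≤ p k :=
  prod_le_inf.trans (Finset.inf_le (Finset.mem_erase.mpr ⟨hki, hk⟩))

end Ideal

theorem annihilator_of_coatom_products_essential_general {R : Type*} [CommRing R]
    [IsNoetherianRing R] {n : ℕ} (p : Fin n → Ideal R)
    (hrange : minimalPrimes R = Set.range p)
    (q : Fin n → Ideal R) (hq : ∀ i, q i = ∏ j ∈ Finset.univ.erase i, p j)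
    {i j : Fin n} (hij : i ≠ j) :
    IsEssentialIdeal R (Submodule.annihilator (q i * q j)) := by
  classical
  have hq_le : ∀ l k, k ≠ l → q l ≤ p k := fun l k hkl =>
    hq l ▸ Ideal.prod_erase_le p (Finset.mem_univ k) hkl
  refine Ideal.isEssentialIdeal_annihilator_of_isNilpotent <|
    Ideal.isNilpotent_of_le_nilradical <| Ideal.le_nilradical_of_forall_minimalPrimes ?_
  rw [hrange]
  rintro _ ⟨k, rfl⟩
  by_cases hki : k = i
  · exact Ideal.mul_le_right.trans (hq_le j k (hki ▸ hij))
  · exact Ideal.mul_le_left.trans (hq_le i k hki)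

theorem annihilator_of_coatom_products_essential {R : Type*} [CommRing R]
    [IsNoetherianRing R] {n : ℕ} (hn : 2 ≤ n) (p : Fin n → Ideal R)
    (hinj : Function.Injective p) (hrange : minimalPrimes R = Set.range p)
    (q : Fin n → Ideal R) (hq : ∀ i, q i = ∏ j ∈ Finset.univ.erase i, p j)
    {i j : Fin n} (hij : i ≠ j) :
    IsEssentialIdeal R (Submodule.annihilator (q i * q j)) :=
  annihilator_of_coatom_products_essential_general p hrange q hq hij
end

section
/- Let R be a commutative Noetherian ring with minimal primes p_1, ..., p_n, and let I, J be ideals of R with I ⊄ p_i and J ⊄ p_i for some i. Then Ann(IJ) is not an essential ideal of R. -/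
theorem not_essential_annihilator_of_not_le_minimalPrime {R : Type*} [CommRing R]
    [IsNoetherianRing R] {I J p : Ideal R} (hp : p ∈ minimalPrimes R)
    (hI : ¬ I ≤ p) (hJ : ¬ J ≤ p) :
    ¬ IsEssentialIdeal R (Submodule.annihilator (I * J)) := by
  intro hess
  have hpP : p.IsPrime := hp.1.1
  obtain ⟨a, haI, hap⟩ := SetLike.not_le_iff_exists.mp hI
  obtain ⟨b, hbJ, hbp⟩ := SetLike.not_le_iff_exists.mp hJ
  set x := a * b with hx
  have hxp : x ∉ p := fun h => (hpP.mem_or_mem h).elim hap hbp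
  have hxIJ : x ∈ I * J := Ideal.mul_mem_mul haI hbJ
  have hpow : ∀ n : ℕ, x ^ n ≠ 0 := by
    intro n hn
    exact hxp (nilradical_le_prime p (mem_nilradical.mpr ⟨n, hn⟩))
  -- ascending chain of annihilators
  have hmono : Monotone (fun n : ℕ => Submodule.annihilator (Ideal.span {x ^ n})) := by
    intro m n hmn
    exact Submodule.annihilator_mono
      (Ideal.span_singleton_le_span_singleton.mpr (pow_dvd_pow x hmn))
  obtain ⟨n, hn⟩ := monotone_stabilizes_iff_noetherian.mpr (inferInstance : IsNoetherian R R)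
    ⟨fun n : ℕ => Submodule.annihilator (Ideal.span {x ^ n}), hmono⟩
  have hstab : Submodule.annihilator (Ideal.span {x ^ n})
      = Submodule.annihilator (Ideal.span {x ^ (n + 1)}) := hn (n + 1) (Nat.le_succ n)
  have hKne : Ideal.span {x ^ n} ≠ (⊥ : Ideal R) := by
    simpa [Ideal.span_singleton_eq_bot] using hpow n
  apply hess (Ideal.span {x ^ n}) hKne
  rw [eq_bot_iff]
  intro y hy
  obtain ⟨hy1, hy2⟩ := hy
  obtain ⟨r, hr⟩ := Ideal.mem_span_singleton'.mp hy2
  have hyx : y * x = 0 := Submodule.mem_annihilator.mp hy1 x hxIJ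
  have hrann : r ∈ Submodule.annihilator (Ideal.span {x ^ (n + 1)}) := by
    rw [Submodule.mem_annihilator]
    intro m hm
    obtain ⟨s, hs⟩ := Ideal.mem_span_singleton'.mp hm
    have : r * x ^ (n + 1) = 0 := by
      have := hyx
      rw [← hr] at this
      calc r * x ^ (n + 1) = r * x ^ n * x := by ring
        _ = 0 := this
    rw [← hs]
    calc r • (s * x ^ (n + 1)) = s * (r * x ^ (n + 1)) := by simp only [smul_eq_mul]; ring
      _ = 0 := by rw [this]; ring
  rw [← hstab] at hrann
  have : r * x ^ n = 0 := by
    have := Submodule.mem_annihilator.mp hrann (x ^ n) (Ideal.mem_span_singleton_self _)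
    simpa [smul_eq_mul] using this
  show y ∈ (⊥ : Ideal R)
  simp [← hr, this]
end

section
/- Let R be a commutative ring with identity such that the essential annihilating-ideal graph EG(R) has finite clique number and Z(R) = Nil(R) ≠ 0. Then R is an Artinian local ring. -/
/-- Vertices of the essential annihilating-ideal graph: nonzero ideals with
nonzero annihilator. -/
def AnnVertex (R : Type*) [CommRing R] : Type _ :=
  {I : Ideal R // I ≠ ⊥ ∧ Submodule.annihilator I ≠ ⊥}

/-- The essential annihilating-ideal graph `EG(R)`. -/
def EG (R : Type*) [CommRing R] : SimpleGraph (AnnVertex R) where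
  Adj I J := I ≠ J ∧ IsEssentialIdeal R (Submodule.annihilator (I.1 * J.1))
  symm := by
    constructor
    intro I J h
    refine ⟨h.1.symm, ?_⟩
    rw [mul_comm]
    exact h.2
  loopless := by constructor; intro I h; exact h.1 rfl

/-!
A finitely generated ideal `I` inside the nilradical is nilpotent, so its annihilator is
essential: for `J ≠ ⊥`, the last nonzero ideal in the chain `J, J I, J I², …` lies in
`J ⊓ Ann I`. Hence any two such ideals `I ≠ J` are adjacent in `EG(R)` (`I J` is again one of
them), and finiteness of the clique number leaves only finitely many of them. Then every ideal
inside the nilradical is finitely generated, so there are only finitely many such ideals.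
Picking `0 ≠ a ∈ Nil(R)`, both `Ann(a) ⊆ Z(R) = Nil(R)` and `R ⧸ Ann(a) ≅ R a ⊆ Nil(R)` have
finitely many submodules, so `R` is Artinian. In an Artinian ring every nonunit is a
zero-divisor, hence nilpotent, and the nilpotents are closed under addition: `R` is local.
-/

lemma SimpleGraph.IsClique.finite_of_forall_card_le {V : Type*} {G : SimpleGraph V} {n : ℕ}
    (hG : ∀ s : Finset V, G.IsClique ↑s → s.card ≤ n) {S : Set V} (hS : G.IsClique S) :
    S.Finite := by
  by_contra hinf
  obtain ⟨t, hts, htc⟩ := Set.Infinite.exists_subset_card_eq hinf (n + 1)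
  have := hG t (hS.subset hts)
  omega

lemma Submodule.fg_of_finite_setOf_fg_le {R M : Type*} [Semiring R] [AddCommMonoid M]
    [Module R M] (N : Submodule R M) (h : {P : Submodule R M | P.FG ∧ P ≤ N}.Finite) :
    N.FG := by
  have hN : N = sSup {P : Submodule R M | P.FG ∧ P ≤ N} := by
    refine le_antisymm (fun x hx => ?_) (sSup_le fun P hP => hP.2)
    have hx' : span R {x} ∈ {P : Submodule R M | P.FG ∧ P ≤ N} :=
      ⟨fg_span_singleton x, (span_singleton_le_iff_mem x N).mpr hx⟩
    exact le_sSup hx' (mem_span_singleton_self x)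
  have : Finite {P : Submodule R M | P.FG ∧ P ≤ N} := h.to_subtype
  rw [hN, sSup_eq_iSup']
  exact fg_iSup _ fun P => P.2.1

lemma isArtinian_of_finite_Iic {R M : Type*} [Ring R] [AddCommGroup M] [Module R M]
    (N : Submodule R M) (h : (Set.Iic N).Finite) : IsArtinian R N :=
  have : Finite (Set.Iic N) := h.to_subtype
  have : Finite (Submodule R N) := Finite.of_equiv _ (Submodule.mapIic N).symm.toEquiv
  ⟨Finite.wellFounded_of_trans_of_irrefl _⟩

section Essential

variable {R : Type*} [CommRing R]

lemma IsEssentialIdeal.ne_bot [Nontrivial R] {E : Ideal R} (hE : IsEssentialIdeal R E) :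
    E ≠ ⊥ := by
  simpa using hE ⊤ top_ne_bot

lemma IsNilpotent.isEssentialIdeal_annihilator {I : Ideal R} (hI : IsNilpotent I) :
    IsEssentialIdeal R (Submodule.annihilator I) := by
  intro J hJ hAnn
  obtain ⟨n, hn⟩ := hI
  have hne : ∀ k, J * I ^ k ≠ ⊥ := by
    intro k
    induction k with
    | zero => simpa using hJ
    | succ k ih =>
      intro hk
      refine ih (le_bot_iff.mp (hAnn ▸ le_inf ?_ Ideal.mul_le_left))
      rwa [Submodule.le_annihilator_iff, smul_eq_mul, mul_assoc, ← _root_.pow_succ]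
  exact hne n (by rw [hn, Ideal.zero_eq_bot, Ideal.mul_bot])

lemma isEssentialIdeal_annihilator_of_fg_of_le_nilradical {I : Ideal R} (hfg : I.FG)
    (hle : I ≤ nilradical R) : IsEssentialIdeal R (Submodule.annihilator I) :=
  (hfg.isNilpotent_iff_le_nilradical.mpr hle).isEssentialIdeal_annihilator

end Essential

section Finiteness

variable {R : Type*} [CommRing R] [Nontrivial R]

lemma finite_setOf_fg_le_nilradical
    (hclique : ∃ n : ℕ, ∀ s : Finset (AnnVertex R), (EG R).IsClique ↑s → s.card ≤ n) :
    {I : Ideal R | I.FG ∧ I ≤ nilradical R}.Finite := by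
  obtain ⟨n, hn⟩ := hclique
  let S : Set (AnnVertex R) := {v | v.1.FG ∧ v.1 ≤ nilradical R}
  have hS : (EG R).IsClique S := fun v hv w hw hvw =>
    ⟨hvw, isEssentialIdeal_annihilator_of_fg_of_le_nilradical (hv.1.mul hw.1)
      (Ideal.mul_le_right.trans hw.2)⟩
  refine (((hS.finite_of_forall_card_le hn).image Subtype.val).insert ⊥).subset ?_
  intro I ⟨hfg, hle⟩
  rcases eq_or_ne I ⊥ with rfl | hI
  · exact Set.mem_insert _ _
  · exact Or.inr ⟨⟨I, hI, (isEssentialIdeal_annihilator_of_fg_of_le_nilradical hfg hle).ne_bot⟩,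
      ⟨hfg, hle⟩, rfl⟩

lemma finite_Iic_nilradical
    (hclique : ∃ n : ℕ, ∀ s : Finset (AnnVertex R), (EG R).IsClique ↑s → s.card ≤ n) :
    (Set.Iic (nilradical R)).Finite := by
  have hfin := finite_setOf_fg_le_nilradical hclique
  refine hfin.subset fun I hI => ⟨I.fg_of_finite_setOf_fg_le (hfin.subset ?_), hI⟩
  exact fun P hP => ⟨hP.1, hP.2.trans hI⟩

end Finiteness

section Artinian

variable {R : Type*} [CommRing R]

lemma isArtinianRing_of_finite_Iic_nilradical (hfin : (Set.Iic (nilradical R)).Finite)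
    (hZ : ∀ x y : R, y ≠ 0 → x * y = 0 → IsNilpotent x) (hnil : nilradical R ≠ ⊥) :
    IsArtinianRing R := by
  obtain ⟨a, ha, ha0⟩ := (Submodule.ne_bot_iff _).mp hnil
  have htors : Ideal.torsionOf R R a ≤ nilradical R := fun r hr =>
    mem_nilradical.mpr (hZ r a ha0 hr)
  have hspan : Submodule.span R {a} ≤ nilradical R := (Ideal.span_singleton_le_iff_mem _).mpr ha
  have : IsArtinian R (R ∙ a) := isArtinian_of_finite_Iic _ (hfin.subset fun J hJ => hJ.trans hspan)
  exact (isArtinian_iff_submodule_quotient (Ideal.torsionOf R R a)).mpr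
    ⟨isArtinian_of_finite_Iic _ (hfin.subset fun J hJ => hJ.trans htors),
      isArtinian_of_linearEquiv (Ideal.quotTorsionOfEquivSpanSingleton R R a).symm⟩

lemma IsArtinianRing.isLocalRing_of_isNilpotent_of_mul_eq_zero [IsArtinianRing R] [Nontrivial R]
    (hZ : ∀ x y : R, y ≠ 0 → x * y = 0 → IsNilpotent x) : IsLocalRing R := by
  have hnonunit : ∀ r ∈ nonunits R, IsNilpotent r := fun r hr => by
    have hr' : r ∉ nonZeroDivisors R := mt isUnit_iff_mem_nonZeroDivisors.mpr hr
    obtain ⟨s, hrs, hs⟩ := notMem_nonZeroDivisors_iff_left.mp hr'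
    exact hZ r s hs hrs
  refine IsLocalRing.of_nonunits_add fun a b ha hb => ?_
  exact ((Commute.all a b).isNilpotent_add (hnonunit a ha) (hnonunit b hb)).not_isUnit

end Artinian

theorem artinian_local_of_finite_clique_and_zeroDivisors_eq_nilradical
    {R : Type*} [CommRing R]
    (hclique : ∃ n : ℕ, ∀ s : Finset (AnnVertex R), (EG R).IsClique ↑s → s.card ≤ n)
    (hZ : {x : R | ∃ y : R, y ≠ 0 ∧ x * y = 0} = {x : R | IsNilpotent x})
    (hnil : nilradical R ≠ ⊥) :
    IsArtinianRing R ∧ IsLocalRing R := by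
  have hZ' : ∀ x y : R, y ≠ 0 → x * y = 0 → IsNilpotent x := fun x y hy hxy =>
    (Set.ext_iff.mp hZ x).mp ⟨y, hy, hxy⟩
  obtain ⟨a, -, ha0⟩ := (Submodule.ne_bot_iff _).mp hnil
  have : Nontrivial R := nontrivial_of_ne a 0 ha0
  have : IsArtinianRing R :=
    isArtinianRing_of_finite_Iic_nilradical (finite_Iic_nilradical hclique) hZ' hnil
  exact ⟨this, IsArtinianRing.isLocalRing_of_isNilpotent_of_mul_eq_zero hZ'⟩
end

section
/- Let R be a reduced commutative ring such that its essential annihilating-ideal graph EG(R) is complete bipartite with both parts infinite (i.e., EG(R) = K_{∞,∞}, in particular triangle-free with no isolated structure forcing a 3-cycle). Then R has exactly two minimal prime ideals. -/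
/-!
Let `A` and `B` be the sums of the ideals in the two parts. Every ideal of the first part
kills every ideal of the second, so `A * B = 0`, and `A ⊓ B = 0` since `R` is reduced.
`Ann A` is prime: if `x * y` kills `A`, then `xA` and `yA` are ideals with zero product, so
if both were nonzero they would be adjacent vertices, one of them would lie in `B`, and
`A ⊓ B = 0` would kill it. The ideal `Ann A ⊓ Ann B` is zero, for otherwise it would be a
vertex (annihilated by `A`), contained in `A` or `B` and annihilated by it. Two nonzero
primes with zero intersection are exactly the minimal primes.
-/

open Submodule (annihilator)

namespace Ideal

variable {R : Type*} [CommRing R]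

lemma le_annihilator_iff_mul_eq_bot {I J : Ideal R} : I ≤ annihilator J ↔ I * J = ⊥ :=
  Submodule.le_annihilator_iff

lemma span_singleton_mul_eq_bot_iff {x : R} {I : Ideal R} :
    span {x} * I = ⊥ ↔ x ∈ annihilator I := by
  rw [← le_annihilator_iff_mul_eq_bot, span_singleton_le_iff_mem]

lemma annihilator_ne_bot_of_mul_eq_bot {I J : Ideal R} (hJ : J ≠ ⊥) (h : J * I = ⊥) :
    annihilator I ≠ ⊥ :=
  fun hI ↦ hJ <| le_bot_iff.1 <| hI ▸ le_annihilator_iff_mul_eq_bot.2 h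

lemma isPrime_annihilator_of_forall_mul_eq_bot {A : Ideal R} (hA : A ≠ ⊥)
    (h : ∀ X ≤ A, ∀ Y ≤ A, X * Y = ⊥ → X = ⊥ ∨ Y = ⊥) : (annihilator A).IsPrime := by
  refine isPrime_iff.2 ⟨fun htop ↦ hA (Submodule.annihilator_eq_top_iff.1 htop), ?_⟩
  intro x y hxy
  simp only [← span_singleton_mul_eq_bot_iff] at hxy ⊢
  refine h (span {x} * A) mul_le_right (span {y} * A) mul_le_right (le_bot_iff.1 ?_)
  calc span {x} * A * (span {y} * A) = span {x * y} * (A * A) := by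
        rw [← span_singleton_mul_span_singleton, mul_mul_mul_comm]
    _ ≤ span {x * y} * A := mul_mono_right mul_le_left
    _ = ⊥ := hxy

lemma minimal_isPrime_of_inf_eq_bot {p q : Ideal R} [p.IsPrime] (hpq : p ⊓ q = ⊥)
    (hq : q ≠ ⊥) : Minimal IsPrime p := by
  refine ⟨‹_›, fun P hP hPp ↦ ?_⟩
  have hpqP : p * q ≤ P := mul_le_inf.trans (hpq ▸ bot_le)
  refine (hP.mul_le.1 hpqP).resolve_right fun hqP ↦ hq ?_
  exact le_bot_iff.1 (hpq ▸ le_inf (hqP.trans hPp) le_rfl)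

lemma minimalPrimes_eq_pair {p q : Ideal R} [p.IsPrime] [q.IsPrime] (hpq : p ⊓ q = ⊥)
    (hp : p ≠ ⊥) (hq : q ≠ ⊥) : minimalPrimes R = {p, q} := by
  have hp_min := minimal_isPrime_of_inf_eq_bot hpq hq
  have hq_min := minimal_isPrime_of_inf_eq_bot (inf_comm p q ▸ hpq) hp
  ext P
  rw [minimalPrimes_eq_minimals]
  refine ⟨fun hP ↦ ?_, ?_⟩
  · have hpqP : p * q ≤ P := mul_le_inf.trans (hpq ▸ bot_le)
    rcases hP.1.mul_le.1 hpqP with hpP | hqP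
    · exact .inl (hP.eq_of_le ‹_› hpP).symm
    · exact .inr (hP.eq_of_le ‹_› hqP).symm
  · rintro (rfl | rfl)
    exacts [hp_min, hq_min]

section IsReduced

variable [IsReduced R]

lemma inf_eq_bot_of_mul_eq_bot {I J : Ideal R} (h : I * J = ⊥) : I ⊓ J = ⊥ :=
  le_bot_iff.1 <| calc
    I ⊓ J ≤ radical I ⊓ radical J := inf_le_inf le_radical le_radical
    _ = ⊥ := by rw [← radical_mul, h, radical_bot_of_isReduced]

lemma inf_annihilator_eq_bot (I : Ideal R) : I ⊓ annihilator I = ⊥ :=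
  inf_eq_bot_of_mul_eq_bot (Submodule.mul_annihilator I)

end IsReduced

end Ideal

namespace EG

open Ideal

variable {R : Type*} [CommRing R]

def vertexOfMulEqBot {X Y : Ideal R} (hX : X ≠ ⊥) (hY : Y ≠ ⊥) (h : Y * X = ⊥) :
    AnnVertex R :=
  ⟨X, hX, annihilator_ne_bot_of_mul_eq_bot hY h⟩

lemma adj_iff [IsReduced R] {I J : AnnVertex R} : (EG R).Adj I J ↔ I ≠ J ∧ I.1 * J.1 = ⊥ := by
  refine and_congr_right fun _ ↦ ⟨fun hess ↦ ?_, fun h K hK ↦ ?_⟩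
  · by_contra h
    exact hess _ h (inf_comm (I.1 * J.1) _ ▸ inf_annihilator_eq_bot _)
  · rwa [h, Submodule.annihilator_bot, top_inf_eq]

def vertexSup (V : Set (AnnVertex R)) : Ideal R :=
  ⨆ I ∈ V, I.1

variable {V W : Set (AnnVertex R)}

lemma le_vertexSup {I : AnnVertex R} (hI : I ∈ V) : I.1 ≤ vertexSup V :=
  le_biSup (fun I : AnnVertex R ↦ I.1) hI

lemma vertexSup_ne_bot (hV : V.Nonempty) : vertexSup V ≠ ⊥ := by
  obtain ⟨I, hI⟩ := hV
  exact fun h ↦ I.2.1 (le_bot_iff.1 ((le_vertexSup hI).trans h.le))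

lemma vertexSup_mul_vertexSup_eq_bot (h : ∀ I ∈ V, ∀ J ∈ W, I.1 * J.1 = ⊥) :
    vertexSup V * vertexSup W = ⊥ := by
  simp only [vertexSup, Submodule.iSup_mul, Submodule.mul_iSup, iSup_eq_bot]
  exact fun J hJ I hI ↦ h I hI J hJ

variable [IsReduced R]

lemma isPrime_annihilator_vertexSup (hV : V.Nonempty) (hVW : vertexSup V * vertexSup W = ⊥)
    (hadj : ∀ I J, (EG R).Adj I J → I ∈ W ∨ J ∈ W) : (annihilator (vertexSup V)).IsPrime := by
  refine isPrime_annihilator_of_forall_mul_eq_bot (vertexSup_ne_bot hV) fun X hX Y hY hXY ↦ ?_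
  by_contra! hne
  have hW : ∀ Z : AnnVertex R, Z.1 ≤ vertexSup V → Z ∉ W := fun Z hZ hZW ↦
    Z.2.1 <| le_bot_iff.1 <| (le_inf hZ (le_vertexSup hZW)).trans (inf_eq_bot_of_mul_eq_bot hVW).le
  have hXX : X * X ≠ ⊥ := fun h ↦ hne.1 (inf_idem X ▸ inf_eq_bot_of_mul_eq_bot h)
  set vX := vertexOfMulEqBot hne.1 hne.2 (mul_comm X Y ▸ hXY)
  set vY := vertexOfMulEqBot hne.2 hne.1 hXY
  have hvXY : (EG R).Adj vX vY :=
    adj_iff.2 ⟨fun h ↦ hXX (by rwa [← show X = Y from congrArg Subtype.val h] at hXY), hXY⟩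
  rcases hadj vX vY hvXY with h | h
  exacts [hW vX hX h, hW vY hY h]

lemma annihilator_inf_annihilator_vertexSup_eq_bot (hV : V.Nonempty) (hu : V ∪ W = Set.univ) :
    annihilator (vertexSup V) ⊓ annihilator (vertexSup W) = ⊥ := by
  set K := annihilator (vertexSup V) ⊓ annihilator (vertexSup W)
  by_contra hK
  have hVK : vertexSup V * K = ⊥ := by
    rw [mul_comm, ← le_annihilator_iff_mul_eq_bot]; exact inf_le_left
  have hK_mem : vertexOfMulEqBot hK (vertexSup_ne_bot hV) hVK ∈ V ∪ W := hu ▸ trivial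
  refine hK (le_bot_iff.1 ?_)
  rcases hK_mem with h | h
  · exact inf_annihilator_eq_bot (vertexSup V) ▸ le_inf (le_vertexSup h) inf_le_left
  · exact inf_annihilator_eq_bot (vertexSup W) ▸ le_inf (le_vertexSup h) inf_le_right

end EG

theorem two_minimalPrimes_of_complete_bipartite_infinite_general {R : Type*} [CommRing R]
    [IsReduced R] (V₁ V₂ : Set (AnnVertex R)) (hu : V₁ ∪ V₂ = Set.univ)
    (h₁ : V₁.Infinite) (h₂ : V₂.Infinite)
    (hadj : ∀ I J : AnnVertex R,
      (EG R).Adj I J ↔ ((I ∈ V₁ ∧ J ∈ V₂) ∨ (I ∈ V₂ ∧ J ∈ V₁))) :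
    ∃ p q : Ideal R, p ≠ q ∧ minimalPrimes R = {p, q} := by
  have hAB : EG.vertexSup V₁ * EG.vertexSup V₂ = ⊥ := EG.vertexSup_mul_vertexSup_eq_bot
    fun I hI J hJ ↦ (EG.adj_iff.1 ((hadj I J).2 (.inl ⟨hI, hJ⟩))).2
  have hadj₁ : ∀ I J, (EG R).Adj I J → I ∈ V₁ ∨ J ∈ V₁ := fun I J h ↦ by
    rcases (hadj I J).1 h with h | h <;> simp [h]
  have hadj₂ : ∀ I J, (EG R).Adj I J → I ∈ V₂ ∨ J ∈ V₂ := fun I J h ↦ by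
    rcases (hadj I J).1 h with h | h <;> simp [h]
  have := EG.isPrime_annihilator_vertexSup h₁.nonempty hAB hadj₂
  have hBA : EG.vertexSup V₂ * EG.vertexSup V₁ = ⊥ := mul_comm (EG.vertexSup V₁) _ ▸ hAB
  have := EG.isPrime_annihilator_vertexSup h₂.nonempty hBA hadj₁
  have hinf := EG.annihilator_inf_annihilator_vertexSup_eq_bot h₁.nonempty hu
  have hp := Ideal.annihilator_ne_bot_of_mul_eq_bot (EG.vertexSup_ne_bot h₂.nonempty) hBA
  have hq := Ideal.annihilator_ne_bot_of_mul_eq_bot (EG.vertexSup_ne_bot h₁.nonempty) hAB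
  refine ⟨_, _, fun h ↦ hq ?_, Ideal.minimalPrimes_eq_pair hinf hp hq⟩
  rwa [h, inf_idem] at hinf

theorem two_minimalPrimes_of_complete_bipartite_infinite {R : Type*} [CommRing R]
    [IsReduced R] (V₁ V₂ : Set (AnnVertex R)) (hu : V₁ ∪ V₂ = Set.univ)
    (hd : Disjoint V₁ V₂) (h₁ : V₁.Infinite) (h₂ : V₂.Infinite)
    (hadj : ∀ I J : AnnVertex R,
      (EG R).Adj I J ↔ ((I ∈ V₁ ∧ J ∈ V₂) ∨ (I ∈ V₂ ∧ J ∈ V₁))) :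
    ∃ p q : Ideal R, p ≠ q ∧ minimalPrimes R = {p, q} :=
  two_minimalPrimes_of_complete_bipartite_infinite_general V₁ V₂ hu h₁ h₂ hadj
end

section
/- Let R be a reduced commutative ring with exactly two minimal primes p_1, p_2 and Soc(R) = 0. Then EG(R) is a complete bipartite graph with both parts infinite, where the parts are the nonzero annihilating-ideals contained in p_1 and in p_2 respectively. -/
theorem Set.infinite_setOf_ne_bot_and_le {α : Type*} [PartialOrder α] [OrderBot α]
    (hα : ∀ x : α, ¬IsAtom x) {a : α} (ha : a ≠ ⊥) : {x : α | x ≠ ⊥ ∧ x ≤ a}.Infinite := by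
  intro hfin
  obtain ⟨m, hm⟩ := hfin.exists_minimal ⟨a, ha, le_rfl⟩
  refine hα m ⟨hm.prop.1, fun y hy => ?_⟩
  by_contra hy0
  exact hm.not_lt ⟨hy0, hy.le.trans hm.prop.2⟩ hy

namespace Ideal

variable {R : Type*} [CommRing R] {p q I J : Ideal R}

theorem inf_eq_bot_of_minimalPrimes_eq_pair [IsReduced R] (h : minimalPrimes R = {p, q}) :
    p ⊓ q = ⊥ := by
  rw [← sInf_pair, ← h, sInf_minimalPrimes, radical_bot_of_isReduced]

theorem ne_bot_of_minimalPrimes_eq_pair (hne : p ≠ q) (h : minimalPrimes R = {p, q}) :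
    p ≠ ⊥ := by
  rintro rfl
  have hq : q ∈ minimalPrimes R := h ▸ Set.mem_insert_of_mem _ rfl
  have hbot : (⊥ : Ideal R) ∈ minimalPrimes R := h ▸ Set.mem_insert _ _
  exact hne (((IsMinimalPrime.iff_minimal q).1 hq).eq_of_ge
    (IsMinimalPrime.isPrime hbot) bot_le).symm

theorem annihilator_le_of_not_le [hq : q.IsPrime] (h : ¬I ≤ q) :
    Submodule.annihilator I ≤ q :=
  (hq.mul_le.1 (by simp)).resolve_right h

section DisjointPrimes

variable (hpq : p ⊓ q = ⊥)
include hpq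

theorem eq_bot_of_le_of_le (hp : I ≤ p) (hq : I ≤ q) : I = ⊥ :=
  le_bot_iff.1 (hpq ▸ le_inf hp hq)

theorem annihilator_ne_bot_of_le (hq : q ≠ ⊥) (hI : I ≤ p) : Submodule.annihilator I ≠ ⊥ := by
  refine ne_bot_of_le_ne_bot hq (Submodule.le_annihilator_iff.2 ?_)
  exact le_bot_iff.1 (hpq ▸ inf_comm p q ▸ mul_le_inf.trans (inf_le_inf_left q hI))

theorem le_or_le_of_annihilator_ne_bot [p.IsPrime] [q.IsPrime]
    (hI : Submodule.annihilator I ≠ ⊥) : I ≤ p ∨ I ≤ q := by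
  by_contra! h
  exact hI (le_bot_iff.1 (hpq ▸
    le_inf (annihilator_le_of_not_le h.1) (annihilator_le_of_not_le h.2)))

theorem isEssentialIdeal_annihilator_mul (hI : I ≤ p) (hJ : J ≤ q) :
    IsEssentialIdeal R (Submodule.annihilator (I * J)) := by
  rw [eq_bot_of_le_of_le hpq (mul_le_left.trans hI) (mul_le_right.trans hJ),
    Submodule.annihilator_bot]
  intro K hK
  rwa [top_inf_eq]

theorem not_isEssentialIdeal_annihilator_mul [hq : q.IsPrime] (hp : p ≠ ⊥) (hI : I ≤ p)
    (hI0 : I ≠ ⊥) (hJ : J ≤ p) (hJ0 : J ≠ ⊥) :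
    ¬IsEssentialIdeal R (Submodule.annihilator (I * J)) := by
  have hIJ : ¬I * J ≤ q := by
    rw [hq.mul_le]
    rintro (h | h)
    exacts [hI0 (eq_bot_of_le_of_le hpq hI h), hJ0 (eq_bot_of_le_of_le hpq hJ h)]
  intro hess
  exact hess p hp (le_bot_iff.1 ((inf_le_inf_right p (annihilator_le_of_not_le hIJ)).trans
    (inf_comm p q ▸ hpq).le))

end DisjointPrimes

end Ideal

namespace AnnVertex

variable {R : Type*} [CommRing R] {p q : Ideal R}

open Ideal

theorem infinite_setOf_le (hR : ∀ I : Ideal R, ¬IsAtom I) (hpq : p ⊓ q = ⊥) (hp : p ≠ ⊥)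
    (hq : q ≠ ⊥) : {I : AnnVertex R | I.1 ≤ p}.Infinite := by
  refine Set.Infinite.of_image Subtype.val ((Set.infinite_setOf_ne_bot_and_le hR hp).mono ?_)
  rintro I ⟨hI0, hIp⟩
  exact ⟨⟨I, hI0, annihilator_ne_bot_of_le hpq hq hIp⟩, hIp, rfl⟩

theorem eg_adj_of_le_of_le (hpq : p ⊓ q = ⊥) {I J : AnnVertex R} (hI : I.1 ≤ p)
    (hJ : J.1 ≤ q) : (EG R).Adj I J :=
  ⟨fun h => I.2.1 (eq_bot_of_le_of_le hpq hI (h ▸ hJ)), isEssentialIdeal_annihilator_mul hpq hI hJ⟩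

variable [p.IsPrime] [q.IsPrime] (hpq : p ⊓ q = ⊥)
include hpq

theorem le_or_le (I : AnnVertex R) : I.1 ≤ p ∨ I.1 ≤ q :=
  le_or_le_of_annihilator_ne_bot hpq I.2.2

theorem eg_adj_iff (hp : p ≠ ⊥) (hq : q ≠ ⊥) {I J : AnnVertex R} :
    (EG R).Adj I J ↔ (I.1 ≤ p ∧ J.1 ≤ q) ∨ (I.1 ≤ q ∧ J.1 ≤ p) := by
  have hqp : q ⊓ p = ⊥ := inf_comm p q ▸ hpq
  constructor
  · rintro ⟨-, hess⟩
    rcases le_or_le hpq I with hI | hI <;> rcases le_or_le hpq J with hJ | hJ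
    · exact (not_isEssentialIdeal_annihilator_mul hpq hp hI I.2.1 hJ J.2.1 hess).elim
    · exact Or.inl ⟨hI, hJ⟩
    · exact Or.inr ⟨hI, hJ⟩
    · exact (not_isEssentialIdeal_annihilator_mul hqp hq hI I.2.1 hJ J.2.1 hess).elim
  · rintro (⟨hI, hJ⟩ | ⟨hI, hJ⟩)
    exacts [eg_adj_of_le_of_le hpq hI hJ, eg_adj_of_le_of_le hqp hI hJ]

end AnnVertex

theorem complete_bipartite_infinite_of_two_minimalPrimes_and_socle_zero
    {R : Type*} [CommRing R] [IsReduced R] (p₁ p₂ : Ideal R) (hne : p₁ ≠ p₂)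
    (hmin : minimalPrimes R = {p₁, p₂})
    (hsoc : sSup {I : Ideal R | IsAtom I} = (⊥ : Ideal R)) :
    {I : AnnVertex R | I.1 ≤ p₁}.Infinite ∧ {I : AnnVertex R | I.1 ≤ p₂}.Infinite ∧
    {I : AnnVertex R | I.1 ≤ p₁} ∪ {I : AnnVertex R | I.1 ≤ p₂} = Set.univ ∧
    Disjoint {I : AnnVertex R | I.1 ≤ p₁} {I : AnnVertex R | I.1 ≤ p₂} ∧
    ∀ I J : AnnVertex R, (EG R).Adj I J ↔
      ((I.1 ≤ p₁ ∧ J.1 ≤ p₂) ∨ (I.1 ≤ p₂ ∧ J.1 ≤ p₁)) := by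
  have hp₁ : p₁ ∈ minimalPrimes R := hmin ▸ Set.mem_insert _ _
  have hp₂ : p₂ ∈ minimalPrimes R := hmin ▸ Set.mem_insert_of_mem _ rfl
  have := Ideal.IsMinimalPrime.isPrime hp₁
  have := Ideal.IsMinimalPrime.isPrime hp₂
  have hpq := Ideal.inf_eq_bot_of_minimalPrimes_eq_pair hmin
  have hp₁0 := Ideal.ne_bot_of_minimalPrimes_eq_pair hne hmin
  have hp₂0 := Ideal.ne_bot_of_minimalPrimes_eq_pair hne.symm (Set.pair_comm p₁ p₂ ▸ hmin)
  have hR : ∀ I : Ideal R, ¬IsAtom I := fun I hI => hI.1 (sSup_eq_bot.1 hsoc I hI)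
  refine ⟨AnnVertex.infinite_setOf_le hR hpq hp₁0 hp₂0,
    AnnVertex.infinite_setOf_le hR (inf_comm p₁ p₂ ▸ hpq) hp₂0 hp₁0,
    Set.eq_univ_of_forall (AnnVertex.le_or_le hpq),
    Set.disjoint_left.2 fun I h₁ h₂ => I.2.1 (Ideal.eq_bot_of_le_of_le hpq h₁ h₂),
    fun I J => AnnVertex.eg_adj_iff hpq hp₁0 hp₂0⟩
end

section
/- Let R be a commutative ring. Then the clique number of EG(R) equals 2 if and only if the chromatic number of EG(R) equals 2. -/
/-!
A triangle-free graph in which any two non-adjacent vertices `a`, `c` with a common neighbour have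
a dominator `y` (every neighbour of `a` or `c` is `y` or adjacent to `y`) is bipartite: in a closed
walk `x₀ x₁ … xₙ = x₀` with `n ≥ 3`, replacing `x₀ x₁ x₂` by a dominator of `x₀` and `x₂` gives a
closed walk of length `n - 2`, since every other possibility creates a triangle or a backtrack
that can be cut out. So odd closed walks would shrink down to a loop.

`EG(R)` has dominators. If some vertex has an essential annihilator, it is adjacent to every other
vertex. Otherwise `I ~ J` means `I ≠ J` and `IJ = 0`, and for `a ~ b ~ c` with `a ≁ c` the product
`ac` is a nonzero ideal killed by `b`, hence a vertex dominating `a` and `c`. Since `ω = 2` means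
triangle-free with an edge and `χ = 2` means bipartite with an edge, the two conditions agree.
-/

namespace SimpleGraph

variable {V : Type*} {G : SimpleGraph V}

theorem cliqueNum_eq_iff {n : ℕ} (hn : 0 < n) :
    G.cliqueNum = n ↔ G.CliqueFree (n + 1) ∧ ¬ G.CliqueFree n := by
  constructor
  · intro h
    have hbdd : BddAbove {m | ∃ s, G.IsNClique m s} := by
      by_contra hb
      rw [cliqueNum, Nat.sSup_of_not_bddAbove hb] at h
      omega
    refine ⟨fun s hs => ?_, fun hfree => ?_⟩
    · have := le_csSup hbdd ⟨s, hs⟩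
      rw [← cliqueNum] at this
      omega
    · obtain ⟨s, hs⟩ := G.exists_isNClique_cliqueNum
      exact hfree s (h ▸ hs)
  · rintro ⟨hfree, hclique⟩
    refine IsGreatest.csSup_eq ⟨not_forall_not.mp hclique, ?_⟩
    rintro m ⟨s, hs⟩
    by_contra! hlt
    exact hfree.mono hlt s hs

namespace Walk

theorem exists_walk_getVert_getVert {u v : V} (w : G.Walk u v) {i j : ℕ} (hij : i ≤ j)
    (hj : j ≤ w.length) : ∃ p : G.Walk (w.getVert i) (w.getVert j), p.length = j - i :=
  ⟨((w.drop i).take (j - i)).copy rfl (by rw [drop_getVert, Nat.add_sub_cancel' hij]),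
    by rw [length_copy, take_length, drop_length]; omega⟩

theorem exists_walk_length_eq_sub_of_getVert_eq {u v : V} (w : G.Walk u v) {i j : ℕ}
    (hij : i ≤ j) (hj : j ≤ w.length) (h : w.getVert i = w.getVert j) :
    ∃ p : G.Walk u v, p.length = w.length - (j - i) := by
  obtain ⟨p, hp⟩ := w.exists_walk_getVert_getVert (Nat.zero_le i) (hij.trans hj)
  obtain ⟨q, hq⟩ := w.exists_walk_getVert_getVert hj le_rfl
  exact ⟨(p.append (q.copy h.symm rfl)).copy w.getVert_zero w.getVert_length,
    by rw [length_copy, length_append, length_copy, hp, hq]; omega⟩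

end Walk

def HasDistanceTwoDominators (G : SimpleGraph V) : Prop :=
  ∀ ⦃a b c⦄, G.Adj a b → G.Adj b c → a ≠ c → ¬ G.Adj a c →
    ∃ y, G.neighborSet a ∪ G.neighborSet c ⊆ insert y (G.neighborSet y)

theorem exists_walk_length_eq_sub_two (hT : G.CliqueFree 3) (hdom : G.HasDistanceTwoDominators)
    {u : V} (w : G.Walk u u) (h3 : 3 ≤ w.length) :
    ∃ v, ∃ c : G.Walk v v, c.length = w.length - 2 := by
  classical
  have triangle {a b c : V} (hab : G.Adj a b) (hbc : G.Adj b c) (hca : G.Adj c a) : False :=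
    hT {a, b, c} (is3Clique_triple_iff.mpr ⟨hab, hca.symm, hbc⟩)
  obtain ⟨n, hn⟩ : ∃ n, w.length = n := ⟨_, rfl⟩
  rw [hn] at h3 ⊢
  by_contra! shorter
  set x := w.getVert
  have hx0 : x 0 = u := w.getVert_zero
  have hxn : x n = u := hn ▸ w.getVert_length
  have adj {i : ℕ} (hi : i < n) : G.Adj (x i) (x (i + 1)) := w.adj_getVert_succ (hn ▸ hi)
  have segment {i j : ℕ} (hij : i ≤ j) (hj : j ≤ n) : ∃ p : G.Walk (x i) (x j), p.length = j - i :=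
    w.exists_walk_getVert_getVert hij (hn ▸ hj)
  have h02 : x 0 ≠ x 2 := fun h =>
    have ⟨p, hp⟩ := w.exists_walk_length_eq_sub_of_getVert_eq (by omega) (by omega) h
    shorter _ p (by omega)
  have hn02 : ¬ G.Adj (x 0) (x 2) :=
    fun h => triangle (adj (i := 0) (by omega)) (adj (by omega)) h.symm
  have hn4 : 4 ≤ n := by
    by_contra hlt
    have h23 := adj (i := 2) (by omega)
    rw [show 2 + 1 = n by omega, hxn, ← hx0] at h23
    exact hn02 h23.symm
  have h13 : x 1 ≠ x 3 := fun h =>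
    have ⟨p, hp⟩ := w.exists_walk_length_eq_sub_of_getVert_eq (by omega) (by omega) h
    shorter _ p (by omega)
  have h1n : x 1 ≠ x (n - 1) := by
    intro h
    obtain ⟨p, hp⟩ := segment (i := 1) (j := n - 1) (by omega) (by omega)
    exact shorter _ (p.copy rfl h.symm) (by rw [Walk.length_copy, hp]; omega)
  have hxn1 : G.Adj (x (n - 1)) (x 0) := by
    simpa [Nat.sub_add_cancel (by omega : 1 ≤ n), hx0, hxn] using adj (i := n - 1) (by omega)
  obtain ⟨y, hy⟩ := hdom (adj (i := 0) (by omega)) (adj (i := 1) (by omega)) h02 hn02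
  have hy1 : x 1 ∈ _ := hy (Or.inl (adj (i := 0) (by omega)))
  have hy3 : x 3 ∈ _ := hy (Or.inr (adj (i := 2) (by omega)))
  have hyn : x (n - 1) ∈ _ := hy (Or.inl hxn1.symm)
  simp only [Set.mem_insert_iff, mem_neighborSet] at hy1 hy3 hyn
  rcases hy3 with rfl | hy3
  · exact hy1.elim h13 fun h => triangle (adj (i := 1) (by omega)) (adj (i := 2) (by omega)) h
  rcases hyn with rfl | hyn
  · exact hy1.elim h1n fun h => triangle hxn1 (adj (i := 0) (by omega)) h.symm
  obtain ⟨p, hp⟩ := segment (i := 3) (j := n - 1) (by omega) (by omega)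
  exact shorter _ (Walk.cons hy3 (p.concat hyn.symm))
    (by rw [Walk.length_cons, Walk.length_concat, hp]; omega)

theorem colorable_two_of_cliqueFree_three (hT : G.CliqueFree 3)
    (hdom : G.HasDistanceTwoDominators) : G.Colorable 2 := by
  rw [two_colorable_iff_forall_loop_even]
  suffices ∀ n u, ∀ w : G.Walk u u, w.length = n → Even n from fun u w => this _ u w rfl
  intro n
  induction n using Nat.strong_induction_on with | _ n ih => ?_
  intro u w hn
  rcases lt_or_ge n 3 with hlt | h3
  · interval_cases n
    · exact Even.zero
    · exact ((w.adj_getVert_succ (i := 0) (by omega)).ne (by simp [← hn])).elim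
    · exact even_two
  obtain ⟨v, c, hc⟩ := exists_walk_length_eq_sub_two hT hdom w (hn ▸ h3)
  have := ih (n - 2) (by omega) v c (hn ▸ hc)
  rwa [Nat.even_sub (by omega), iff_true_right even_two] at this

end SimpleGraph

section EssentialIdeal

variable {R : Type*} [CommRing R]

theorem isEssentialIdeal_top : IsEssentialIdeal R ⊤ :=
  fun J hJ => by simpa using hJ

theorem IsEssentialIdeal.mono {E F : Ideal R} (hEF : E ≤ F) (hE : IsEssentialIdeal R E) :
    IsEssentialIdeal R F :=
  fun J hJ h => hE J hJ (eq_bot_mono (inf_le_inf_right J hEF) h)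

end EssentialIdeal

namespace EG

variable {R : Type*} [CommRing R]

theorem adj_of_mul_eq_bot {I J : AnnVertex R} (hIJ : I ≠ J) (h : I.1 * J.1 = ⊥) :
    (EG R).Adj I J :=
  ⟨hIJ, by rw [h, Submodule.annihilator_bot]; exact isEssentialIdeal_top⟩

theorem adj_of_isEssentialIdeal_annihilator {I J : AnnVertex R}
    (hI : IsEssentialIdeal R (Submodule.annihilator I.1)) (hIJ : I ≠ J) : (EG R).Adj I J :=
  ⟨hIJ, hI.mono (Submodule.annihilator_mono Ideal.mul_le_left)⟩

theorem mul_eq_bot_of_adj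
    (hR : ∀ v : AnnVertex R, ¬ IsEssentialIdeal R (Submodule.annihilator v.1))
    {I J : AnnVertex R} (h : (EG R).Adj I J) : I.1 * J.1 = ⊥ := by
  by_contra hne
  refine hR ⟨I.1 * J.1, hne, fun hann => h.2 _ hne ?_⟩ h.2
  rw [hann, bot_inf_eq]

theorem hasDistanceTwoDominators : (EG R).HasDistanceTwoDominators := by
  intro a b c _ hbc hac hnac
  by_cases hR : ∃ v : AnnVertex R, IsEssentialIdeal R (Submodule.annihilator v.1)
  · obtain ⟨v, hv⟩ := hR
    refine ⟨v, fun d _ => ?_⟩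
    by_cases hdv : d = v
    · exact Or.inl hdv
    · exact Or.inr (adj_of_isEssentialIdeal_annihilator hv (Ne.symm hdv))
  push Not at hR
  have hac0 : a.1 * c.1 ≠ ⊥ := fun h => hnac (adj_of_mul_eq_bot hac h)
  have hb : b.1 ≤ Submodule.annihilator (a.1 * c.1) := by
    rw [Submodule.le_annihilator_iff, smul_eq_mul, mul_left_comm, mul_eq_bot_of_adj hR hbc,
      Ideal.mul_bot]
  refine ⟨⟨a.1 * c.1, hac0, fun h => b.2.1 (le_bot_iff.mp (h ▸ hb :))⟩, fun d hd => ?_⟩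
  have hd0 : a.1 * c.1 * d.1 = ⊥ := by
    rcases hd with hd | hd
    · rw [mul_right_comm, mul_eq_bot_of_adj hR hd, Ideal.bot_mul]
    · rw [mul_assoc, mul_eq_bot_of_adj hR hd, Ideal.mul_bot]
  exact or_iff_not_imp_left.mpr fun hne => adj_of_mul_eq_bot (Ne.symm hne) hd0

theorem colorable_two_of_cliqueFree_three (hT : (EG R).CliqueFree 3) : (EG R).Colorable 2 :=
  SimpleGraph.colorable_two_of_cliqueFree_three hT hasDistanceTwoDominators

end EG

theorem cliqueNum_eq_two_iff_chromaticNumber_eq_two {R : Type*} [CommRing R] :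
    (EG R).cliqueNum = 2 ↔ (EG R).chromaticNumber = 2 := by
  rw [SimpleGraph.cliqueNum_eq_iff two_pos, SimpleGraph.cliqueFree_two,
    SimpleGraph.chromaticNumber_eq_two_iff]
  exact and_congr_left' ⟨EG.colorable_two_of_cliqueFree_three, fun h => h.cliqueFree (by norm_num)⟩
end

section
/- Let R be a commutative ring such that EG(R) is a complete bipartite graph K_{m,n}. Then each of m, n is either 1 or infinite. -/
/-!
Let `A ≠ B` lie in a finite part `V₁` and `K ∈ V₂`. As `A`, `B` are not adjacent, some `X ≠ 0`
meets `Ann(AB)` trivially, and `L = (Ann(AK) ∩ Ann(BK) ∩ X) · AB` is a nonzero ideal with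
`LK = 0`. Every nonzero ideal inside `L` is `K` or a neighbour of `K`, hence lies in `V₁ ∪ {K}`,
so `L` contains a minimal ideal `M`. No minimal ideal lies in `V₁`: if `M² = 0` then `Ann M` is
essential and `M` is adjacent to every other vertex; if `M² ≠ 0` then `M = Re` with `e` idempotent,
and for `C ∈ V₁` other than `M` the ideals `C(1 - e)` and `(1 - e)R` are adjacent vertices of `V₂`.
So `M = K`, `K² = 0`, `K` is adjacent to every other vertex, `V₂ = {K}`, and the same argument puts
`K` inside both `Ann(AB)` and `X`, which meet trivially.
-/

theorem exists_isAtom_le_of_finite_Iic {α : Type*} [PartialOrder α] [OrderBot α] {a : α}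
    (ha : a ≠ ⊥) (hfin : (Set.Iic a).Finite) : ∃ m, IsAtom m ∧ m ≤ a := by
  have : Finite (Set.Iic a) := hfin.to_subtype
  obtain h | ⟨m, hm, -⟩ := eq_bot_or_exists_atom_le (⊤ : Set.Iic a)
  · exact absurd (congrArg Subtype.val h) ha
  · exact ⟨m, hm.of_isAtom_coe_Iic, m.2⟩

theorem SimpleGraph.IsBipartiteWith.not_adj {V : Type*} {G : SimpleGraph V} {s t : Set V}
    (h : G.IsBipartiteWith s t) {v w : V} (hv : v ∈ s) (hw : w ∈ s) : ¬G.Adj v w :=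
  fun hvw => Set.disjoint_left.mp h.disjoint hw (h.mem_of_mem_adj hv hvw)

namespace IsEssentialIdeal

variable {R : Type*} [CommRing R] {E F : Ideal R}

theorem top : IsEssentialIdeal R ⊤ := fun J hJ => by rwa [top_inf_eq]

theorem mono_s15 (hE : IsEssentialIdeal R E) (h : E ≤ F) : IsEssentialIdeal R F :=
  fun J hJ hF => hE J hJ (le_bot_iff.mp (hF ▸ inf_le_inf_right J h))

theorem inf (hE : IsEssentialIdeal R E) (hF : IsEssentialIdeal R F) :
    IsEssentialIdeal R (E ⊓ F) :=
  fun J hJ h => hE (F ⊓ J) (hF J hJ) (by rwa [inf_assoc] at h)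

end IsEssentialIdeal

section Ideal

variable {R : Type*} [CommRing R]

open Submodule

theorem annihilator_ne_bot_of_mul_eq_bot {I J : Ideal R} (hJ : J ≠ ⊥) (h : I * J = ⊥) :
    annihilator I ≠ ⊥ := fun hI =>
  hJ (le_bot_iff.mp (hI ▸ le_annihilator_iff.mpr (by rwa [smul_eq_mul, mul_comm])))

theorem annihilator_ne_bot_of_le {I J : Ideal R} (h : I ≤ J) (hJ : annihilator J ≠ ⊥) :
    annihilator I ≠ ⊥ := fun hI => hJ (le_bot_iff.mp (hI ▸ annihilator_mono h))

theorem isEssentialIdeal_annihilator_of_isAtom {M : Ideal R} (hM : IsAtom M) (hsq : M * M = ⊥) :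
    IsEssentialIdeal R (annihilator M) := by
  intro J hJ
  rcases hM.le_iff.mp (inf_le_left : M ⊓ J ≤ M) with hMJ | hMJ
  · have hJM : J ≤ annihilator M := le_annihilator_iff.mpr
      (le_bot_iff.mp (hMJ ▸ inf_comm M J ▸ Ideal.mul_le_inf))
    rwa [inf_eq_right.mpr hJM]
  · exact ne_bot_of_le_ne_bot hM.1 (le_inf (le_annihilator_iff.mpr hsq) (inf_eq_left.mp hMJ))

/-- Brauer's lemma, for commutative rings. -/
theorem exists_isIdempotentElem_eq_span_of_isAtom {M : Ideal R} (hM : IsAtom M)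
    (hsq : M * M ≠ ⊥) : ∃ e : R, IsIdempotentElem e ∧ M = Ideal.span {e} := by
  obtain ⟨a, haM, ha⟩ := exists_mem_ne_zero_of_ne_bot hM.1
  have hMa : M = Ideal.span {a} :=
    ((hM.le_iff.mp ((Ideal.span_singleton_le_iff_mem M).mpr haM)).resolve_left
      (by simpa using ha)).symm
  have hidem : IsIdempotentElem M := (hM.le_iff.mp Ideal.mul_le_left).resolve_left hsq
  exact (M.isIdempotentElem_iff_of_fg (hMa ▸ fg_span_singleton a)).mp hidem

theorem IsIdempotentElem.annihilator_span_singleton {e : R} (he : IsIdempotentElem e) :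
    annihilator (Ideal.span {e}) = Ideal.span {1 - e} :=
  (Submodule.annihilator_span_singleton e).trans he.ker_toSpanSingleton_eq_span

end Ideal

section Graph

variable {R : Type*} [CommRing R]

open Submodule

def AnnVertex.ofMulEqBot {I J : Ideal R} (hI : I ≠ ⊥) (hJ : J ≠ ⊥) (h : I * J = ⊥) :
    AnnVertex R :=
  ⟨I, hI, annihilator_ne_bot_of_mul_eq_bot hJ h⟩

theorem EG.adj_of_mul_eq_bot_s15 {I J : AnnVertex R} (hIJ : I ≠ J) (h : I.1 * J.1 = ⊥) :
    (EG R).Adj I J :=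
  ⟨hIJ, by rw [h, annihilator_bot]; exact IsEssentialIdeal.top⟩

theorem EG.adj_of_isEssentialIdeal {I J : AnnVertex R} (hIJ : I ≠ J)
    (h : IsEssentialIdeal R (annihilator I.1)) : (EG R).Adj I J :=
  ⟨hIJ, h.mono_s15 (annihilator_mono Ideal.mul_le_left)⟩

variable {V₁ V₂ : Set (AnnVertex R)}

theorem mem_right_of_mul_eq_bot (hG : (EG R).IsBipartiteWith V₁ V₂) {m y : AnnVertex R}
    (hm : m ∈ V₁) (hsq : m.1 * m.1 ≠ ⊥) (hy : y.1 * m.1 = ⊥) : y ∈ V₂ := by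
  refine hG.mem_of_mem_adj hm (EG.adj_of_mul_eq_bot_s15 ?_ (by rwa [mul_comm]))
  rintro rfl
  exact hsq hy

theorem notMem_left_of_isAtom_of_mul_self_ne_bot (hG : (EG R).IsBipartiteWith V₁ V₂)
    (hcompl : ∀ v ∈ V₁, ∀ w ∈ V₂, (EG R).Adj v w) {C m : AnnVertex R} (hC : C ∈ V₁)
    (hCm : C ≠ m) (hatom : IsAtom m.1) (hsq : m.1 * m.1 ≠ ⊥) : m ∉ V₁ := by
  intro hm
  obtain ⟨e, he, hme⟩ := exists_isIdempotentElem_eq_span_of_isAtom hatom hsq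
  set W := Ideal.span {1 - e}
  have hAnn : annihilator m.1 = W := by rw [hme, he.annihilator_span_singleton]
  have hWm : W * m.1 = ⊥ := hAnn ▸ annihilator_mul m.1
  have hmC : m.1 ≤ C.1 := by
    have hmC0 : m.1 * C.1 ≠ ⊥ := fun h => hG.not_adj hm hC (EG.adj_of_mul_eq_bot_s15 hCm.symm h)
    calc m.1 = m.1 * C.1 := ((hatom.le_iff.mp Ideal.mul_le_left).resolve_left hmC0).symm
      _ ≤ C.1 := Ideal.mul_le_right
  have hCW : C.1 * W ≠ ⊥ := by
    intro h
    have hCm' : C.1 ≤ m.1 := by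
      rw [hme, ← sub_sub_cancel (1 : R) e, ← he.one_sub.annihilator_span_singleton]
      exact le_annihilator_iff.mpr h
    exact hCm (Subtype.ext ((hatom.le_iff.mp hCm').resolve_left C.2.1))
  have hyW : C.1 * W * m.1 = ⊥ := by
    rw [mul_assoc, hWm, Ideal.mul_bot]
  let w := AnnVertex.ofMulEqBot (hAnn ▸ m.2.2) hatom.1 hWm
  let y := AnnVertex.ofMulEqBot hCW hatom.1 hyW
  have hyw : y ≠ w := by
    intro h
    have hWC : W ≤ C.1 := calc
      W = C.1 * W := (congrArg Subtype.val h).symm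
      _ ≤ C.1 := Ideal.mul_le_left
    have hC1 : e + (1 - e) ∈ C.1 := C.1.add_mem (hmC (hme ▸ Ideal.mem_span_singleton_self e))
      (hWC (Ideal.mem_span_singleton_self (1 - e)))
    rw [add_sub_cancel] at hC1
    exact C.2.2 (eq_bot_iff.mpr fun x hx => by simpa using mem_annihilator.mp hx 1 hC1)
  -- `C` and `w` are adjacent, and `C * W = y * W` because `W` is idempotent, so `y` and `w` are
  -- adjacent vertices of `V₂`.
  have hWW : W * W = W := by
    rw [Ideal.span_singleton_mul_span_singleton, he.one_sub.eq]
  have hw : w ∈ V₂ := mem_right_of_mul_eq_bot hG hm hsq hWm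
  refine hG.symm.not_adj (mem_right_of_mul_eq_bot hG hm hsq (y := y) hyW) hw ⟨hyw, ?_⟩
  show IsEssentialIdeal R (annihilator (C.1 * W * W))
  rw [mul_assoc, hWW]
  exact (hcompl C hC w hw).2

theorem notMem_left_of_isAtom (hG : (EG R).IsBipartiteWith V₁ V₂)
    (hcompl : ∀ v ∈ V₁, ∀ w ∈ V₂, (EG R).Adj v w) (hV₁ : V₁.Nontrivial) {m : AnnVertex R}
    (hatom : IsAtom m.1) : m ∉ V₁ := by
  obtain ⟨C, hC, hCm⟩ := hV₁.exists_ne m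
  by_cases hsq : m.1 * m.1 = ⊥
  · exact fun hm => hG.not_adj hm hC <|
      EG.adj_of_isEssentialIdeal hCm.symm (isEssentialIdeal_annihilator_of_isAtom hatom hsq)
  · exact notMem_left_of_isAtom_of_mul_self_ne_bot hG hcompl hC hCm hatom hsq

theorem isAtom_and_le_of_Iic_subset (hG : (EG R).IsBipartiteWith V₁ V₂)
    (hcompl : ∀ v ∈ V₁, ∀ w ∈ V₂, (EG R).Adj v w) (hV₁ : V₁.Nontrivial) (hfin : V₁.Finite)
    {K Y : Ideal R} (hY : Y ≠ ⊥) (hsub : Set.Iic Y ⊆ insert ⊥ (insert K (Subtype.val '' V₁))) :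
    IsAtom K ∧ K ≤ Y := by
  obtain ⟨M, hM, hMY⟩ :=
    exists_isAtom_le_of_finite_Iic hY ((((hfin.image _).insert K).insert ⊥).subset hsub)
  rcases hsub hMY with hM0 | rfl | ⟨m, hm, rfl⟩
  · exact absurd hM0 hM.1
  · exact ⟨hM, hMY⟩
  · exact absurd hm (notMem_left_of_isAtom hG hcompl hV₁ hM)

theorem isAtom_and_le_of_mul_eq_bot (hG : (EG R).IsBipartiteWith V₁ V₂)
    (hcompl : ∀ v ∈ V₁, ∀ w ∈ V₂, (EG R).Adj v w) (hV₁ : V₁.Nontrivial) (hfin : V₁.Finite)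
    {K : AnnVertex R} (hK : K ∈ V₂) {L : Ideal R} (hL : L ≠ ⊥) (hLK : L * K.1 = ⊥) :
    IsAtom K.1 ∧ K.1 ≤ L := by
  refine isAtom_and_le_of_Iic_subset hG hcompl hV₁ hfin hL fun W (hWL : W ≤ L) => ?_
  by_cases hW : W = ⊥
  · exact Or.inl hW
  by_cases hWK : W = K.1
  · exact Or.inr (Or.inl hWK)
  have hWK0 : W * K.1 = ⊥ := le_bot_iff.mp ((Ideal.mul_mono_left hWL).trans hLK.le)
  let w := AnnVertex.ofMulEqBot hW K.2.1 hWK0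
  have hwK : w ≠ K := fun h => hWK (congrArg Subtype.val h)
  exact Or.inr (Or.inr ⟨w, hG.mem_of_mem_adj' hK (EG.adj_of_mul_eq_bot_s15 hwK hWK0), rfl⟩)

theorem le_of_isAtom_of_mul_self_eq_bot (hG : (EG R).IsBipartiteWith V₁ V₂)
    (hcompl : ∀ v ∈ V₁, ∀ w ∈ V₂, (EG R).Adj v w) (hV₁ : V₁.Nontrivial) (hfin : V₁.Finite)
    {K : AnnVertex R} (hK : K ∈ V₂) (hatom : IsAtom K.1) (hsq : K.1 * K.1 = ⊥) {Y : Ideal R}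
    (hY : Y ≠ ⊥) (hYann : annihilator Y ≠ ⊥) : K.1 ≤ Y := by
  have hess := isEssentialIdeal_annihilator_of_isAtom hatom hsq
  refine (isAtom_and_le_of_Iic_subset hG hcompl hV₁ hfin hY fun W (hWY : W ≤ Y) => ?_).2
  by_cases hW : W = ⊥
  · exact Or.inl hW
  by_cases hWK : W = K.1
  · exact Or.inr (Or.inl hWK)
  let w : AnnVertex R := ⟨W, hW, annihilator_ne_bot_of_le hWY hYann⟩
  have hKw : K ≠ w := fun h => hWK (congrArg Subtype.val h).symm
  exact Or.inr (Or.inr ⟨w, hG.mem_of_mem_adj' hK (EG.adj_of_isEssentialIdeal hKw hess).symm, rfl⟩)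

theorem subsingleton_of_finite (hG : (EG R).IsBipartiteWith V₁ V₂)
    (hcompl : ∀ v ∈ V₁, ∀ w ∈ V₂, (EG R).Adj v w) (hV₂ : V₂.Nonempty) (hfin : V₁.Finite) :
    V₁.Subsingleton := by
  rw [← Set.not_nontrivial_iff]
  intro hV₁
  obtain ⟨A, hA, B, hB, hAB⟩ := id hV₁
  obtain ⟨K, hK⟩ := hV₂
  obtain ⟨X, hX, hABX⟩ : ∃ X, X ≠ ⊥ ∧ annihilator (A.1 * B.1) ⊓ X = ⊥ := by
    by_contra! h
    exact hG.not_adj hA hB ⟨hAB, h⟩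
  set E := annihilator (A.1 * K.1) ⊓ annihilator (B.1 * K.1) ⊓ X
  have hE : E ≠ ⊥ := ((hcompl A hA K hK).2.inf (hcompl B hB K hK).2) X hX
  have hL : E * (A.1 * B.1) ≠ ⊥ := fun h =>
    hE (le_bot_iff.mp ((le_inf (le_annihilator_iff.mpr h) inf_le_right).trans hABX.le))
  have hLK : E * (A.1 * B.1) * K.1 = ⊥ := by
    have hEAK : E * (A.1 * K.1) = ⊥ := le_annihilator_iff.mp (inf_le_left.trans inf_le_left)
    rw [show E * (A.1 * B.1) * K.1 = E * (A.1 * K.1) * B.1 by ring, hEAK, Ideal.bot_mul]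
  obtain ⟨hKatom, hKL⟩ := isAtom_and_le_of_mul_eq_bot hG hcompl hV₁ hfin hK hL hLK
  have hKK : K.1 * K.1 = ⊥ := le_bot_iff.mp ((Ideal.mul_mono_left hKL).trans hLK.le)
  have hAB0 : A.1 * B.1 ≠ ⊥ := fun h => hX (by rwa [h, annihilator_bot, top_inf_eq] at hABX)
  have hKAB : K.1 ≤ annihilator (A.1 * B.1) :=
    le_of_isAtom_of_mul_self_eq_bot hG hcompl hV₁ hfin hK hKatom hKK
      (annihilator_ne_bot_of_le Ideal.mul_le_right B.2.2)
      (annihilator_ne_bot_of_mul_eq_bot hAB0 (annihilator_mul _))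
  have hKX : K.1 ≤ X := hKL.trans (Ideal.mul_le_left.trans inf_le_right)
  exact K.2.1 (le_bot_iff.mp ((le_inf hKAB hKX).trans hABX.le))

theorem infinite_or_eq_singleton (hG : (EG R).IsBipartiteWith V₁ V₂)
    (hcompl : ∀ v ∈ V₁, ∀ w ∈ V₂, (EG R).Adj v w) (hV₁ : V₁.Nonempty) (hV₂ : V₂.Nonempty) :
    V₁.Infinite ∨ ∃ v, V₁ = {v} := by
  refine V₁.finite_or_infinite.symm.imp_right fun hfin => ?_
  obtain ⟨v, hv⟩ := hV₁
  exact ⟨v, (subsingleton_of_finite hG hcompl hV₂ hfin).eq_singleton_of_mem hv⟩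

end Graph

theorem parts_one_or_infinite_of_completeBipartite_general {R : Type*} [CommRing R]
    (V₁ V₂ : Set (AnnVertex R)) (hne₁ : V₁.Nonempty) (hne₂ : V₂.Nonempty)
    (hd : Disjoint V₁ V₂)
    (hadj : ∀ I J : AnnVertex R,
      (EG R).Adj I J ↔ ((I ∈ V₁ ∧ J ∈ V₂) ∨ (I ∈ V₂ ∧ J ∈ V₁))) :
    (V₁.Infinite ∨ ∃ v, V₁ = {v}) ∧ (V₂.Infinite ∨ ∃ v, V₂ = {v}) := by
  have hG : (EG R).IsBipartiteWith V₁ V₂ := ⟨hd, fun v w h => (hadj v w).mp h⟩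
  have hcompl : ∀ v ∈ V₁, ∀ w ∈ V₂, (EG R).Adj v w :=
    fun v hv w hw => (hadj v w).mpr (Or.inl ⟨hv, hw⟩)
  exact ⟨infinite_or_eq_singleton hG hcompl hne₁ hne₂,
    infinite_or_eq_singleton hG.symm (fun v hv w hw => (hcompl w hw v hv).symm) hne₂ hne₁⟩

theorem parts_one_or_infinite_of_completeBipartite {R : Type*} [CommRing R]
    (V₁ V₂ : Set (AnnVertex R)) (hne₁ : V₁.Nonempty) (hne₂ : V₂.Nonempty)
    (hu : V₁ ∪ V₂ = Set.univ) (hd : Disjoint V₁ V₂)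
    (hadj : ∀ I J : AnnVertex R,
      (EG R).Adj I J ↔ ((I ∈ V₁ ∧ J ∈ V₂) ∨ (I ∈ V₂ ∧ J ∈ V₁))) :
    (V₁.Infinite ∨ ∃ v, V₁ = {v}) ∧ (V₂.Infinite ∨ ∃ v, V₂ = {v}) :=
  parts_one_or_infinite_of_completeBipartite_general V₁ V₂ hne₁ hne₂ hd hadj
end

section
/- Let R = F_1 × ⋯ × F_n be a finite direct product of fields with n ≥ 3. Then in EG(R), the maximum vertex degree is 2^{n−1} − 1, and it is attained exactly at the n vertices of the form (0) × ⋯ × F_i × ⋯ × (0). -/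
/-!
Every ideal of `Π i, F i` is `Πᵢ Iᵢ` with each `Iᵢ ∈ {0, Fᵢ}`, i.e. the ideal of functions supported
on some `S ⊆ ι`. Products of such ideals correspond to intersections, annihilators to complements,
and only the whole ring is essential. Hence the vertices of `EG` are the proper nonempty `S`, two of
them are adjacent iff they are disjoint, and the neighbours of `S` are the nonempty subsets of `Sᶜ`:
there are `2 ^ (n - |S|) - 1` of them, which is largest exactly when `|S| = 1`.
-/

theorem two_pow_sub_one_le_two_pow_sub_one_iff {a b : ℕ} : 2 ^ a - 1 ≤ 2 ^ b - 1 ↔ a ≤ b :=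
  (Nat.sub_le_sub_iff_right Nat.one_le_two_pow).trans (Nat.pow_le_pow_iff_right one_lt_two)

section ProductOfFields

variable {ι : Type*} {F : ι → Type*} [∀ i, Field (F i)]

namespace Pi

open Classical in
variable (F) in
noncomputable def supportedIdeal (S : Set ι) : Ideal (Π i, F i) :=
  Ideal.pi fun i => if i ∈ S then ⊤ else ⊥

theorem mem_supportedIdeal {S : Set ι} {x : Π i, F i} :
    x ∈ supportedIdeal F S ↔ ∀ i ∉ S, x i = 0 := by
  refine forall_congr' fun i => ?_
  dsimp only
  split_ifs with hi <;> simp [hi]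

theorem supportedIdeal_le_supportedIdeal_iff {S T : Set ι} :
    supportedIdeal F S ≤ supportedIdeal F T ↔ S ⊆ T := by
  rw [supportedIdeal, supportedIdeal, Ideal.pi_le_pi_iff]
  refine forall_congr' fun i => ?_
  dsimp only
  split_ifs with hS hT hT <;> simp [hS, hT]

theorem supportedIdeal_injective : Function.Injective (supportedIdeal F) := fun _ _ h =>
  subset_antisymm (supportedIdeal_le_supportedIdeal_iff.1 h.le)
    (supportedIdeal_le_supportedIdeal_iff.1 h.ge)

theorem exists_eq_supportedIdeal [Finite ι] (I : Ideal (Π i, F i)) :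
    ∃ S, I = supportedIdeal F S := by
  refine ⟨{i | I.map (Pi.evalRingHom F i) = ⊤}, ?_⟩
  conv_lhs => rw [← Ideal.piOrderIso.symm_apply_apply I]
  refine congrArg Ideal.pi (funext fun i => ?_)
  split_ifs with hi
  · exact hi
  · exact (Ideal.eq_bot_or_top _).resolve_right hi

theorem supportedIdeal_empty : supportedIdeal F ∅ = ⊥ := by
  ext x
  simp [mem_supportedIdeal, funext_iff]

theorem supportedIdeal_univ : supportedIdeal F Set.univ = ⊤ := by
  ext x
  simp [mem_supportedIdeal]

theorem supportedIdeal_eq_bot_iff {S : Set ι} : supportedIdeal F S = ⊥ ↔ S = ∅ := by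
  rw [← supportedIdeal_empty, supportedIdeal_injective.eq_iff]

theorem supportedIdeal_singleton [DecidableEq ι] (i : ι) :
    supportedIdeal F {i} = Ideal.span {Pi.single i 1} := by
  rw [← Ideal.pi_span, supportedIdeal]
  refine congrArg Ideal.pi (funext fun j => ?_)
  rcases eq_or_ne j i with rfl | hj <;> simp [*]

theorem supportedIdeal_inf (S T : Set ι) :
    supportedIdeal F S ⊓ supportedIdeal F T = supportedIdeal F (S ∩ T) := by
  ext x
  simp only [Submodule.mem_inf, mem_supportedIdeal, Set.mem_inter_iff, not_and_or]
  grind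

theorem supportedIdeal_mul (S T : Set ι) :
    supportedIdeal F S * supportedIdeal F T = supportedIdeal F (S ∩ T) := by
  classical
  refine le_antisymm (Ideal.mul_le_inf.trans (supportedIdeal_inf S T).le) fun x hx => ?_
  have hx : ∀ i ∉ S ∩ T, x i = 0 := mem_supportedIdeal.1 hx
  have hxT : x = x * fun i => if i ∈ T then 1 else 0 := by
    ext i
    by_cases hi : i ∈ T <;> simp_all
  rw [hxT]
  refine Ideal.mul_mem_mul (mem_supportedIdeal.2 fun i hi => hx i (hi ·.1))
    (mem_supportedIdeal.2 fun i hi => if_neg hi)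

theorem annihilator_supportedIdeal (S : Set ι) :
    Submodule.annihilator (supportedIdeal F S) = supportedIdeal F Sᶜ := by
  classical
  ext r
  rw [Submodule.mem_annihilator, mem_supportedIdeal]
  refine ⟨fun h i hi => ?_, fun h x hx => funext fun i => ?_⟩
  · have hsingle : Pi.single i 1 ∈ supportedIdeal F S :=
      mem_supportedIdeal.2 fun j hj => Pi.single_eq_of_ne (by rintro rfl; exact hj (not_not.1 hi)) 1
    simpa using congrFun (h _ hsingle) i
  · by_cases hi : i ∈ S
    · simp [h i (not_not.2 hi)]
    · simp [mem_supportedIdeal.1 hx i hi]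

theorem isEssentialIdeal_supportedIdeal_iff [Finite ι] {S : Set ι} :
    IsEssentialIdeal (Π i, F i) (supportedIdeal F S) ↔ S = Set.univ := by
  refine ⟨fun h => Set.eq_univ_of_forall fun i => ?_, ?_⟩
  · by_contra hi
    refine h (supportedIdeal F {i}) (by simp [supportedIdeal_eq_bot_iff]) ?_
    rw [supportedIdeal_inf, supportedIdeal_eq_bot_iff]
    simpa using hi
  · rintro rfl J hJ
    rwa [supportedIdeal_univ, top_inf_eq]

end Pi

open Pi

section Graph

theorem supportedIdeal_isAnnVertex_iff {S : Set ι} :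
    (supportedIdeal F S ≠ ⊥ ∧ Submodule.annihilator (supportedIdeal F S) ≠ ⊥) ↔
      S.Nonempty ∧ S ≠ Set.univ := by
  rw [annihilator_supportedIdeal, Ne, Ne, supportedIdeal_eq_bot_iff, supportedIdeal_eq_bot_iff,
    Set.compl_empty_iff, Set.nonempty_iff_ne_empty]

theorem AnnVertex.nonempty_of_eq_supportedIdeal {v : AnnVertex (Π i, F i)} {S : Set ι}
    (hv : v.1 = supportedIdeal F S) : S.Nonempty :=
  (supportedIdeal_isAnnVertex_iff.1 (hv ▸ v.2)).1

variable [Finite ι] {v w : AnnVertex (Π i, F i)} {S T : Set ι}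

theorem EG_adj_iff_disjoint (hv : v.1 = supportedIdeal F S) (hw : w.1 = supportedIdeal F T) :
    (EG (Π i, F i)).Adj v w ↔ Disjoint S T := by
  have hS := AnnVertex.nonempty_of_eq_supportedIdeal hv
  simp only [EG, hv, hw, supportedIdeal_mul, annihilator_supportedIdeal,
    isEssentialIdeal_supportedIdeal_iff, Set.compl_univ_iff, ← Set.disjoint_iff_inter_eq_empty]
  refine and_iff_right_of_imp fun hST hvw => ?_
  obtain rfl : S = T := supportedIdeal_injective (hv ▸ hw ▸ congrArg Subtype.val hvw)
  exact hS.ne_empty (disjoint_self.1 hST)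

theorem image_neighborSet_EG (hv : v.1 = supportedIdeal F S) :
    (fun w : AnnVertex (Π i, F i) => w.1) '' (EG (Π i, F i)).neighborSet v =
      supportedIdeal F '' (𝒫 Sᶜ \ {∅}) := by
  have hS := AnnVertex.nonempty_of_eq_supportedIdeal hv
  ext I
  constructor
  · rintro ⟨w, hvw, rfl⟩
    obtain ⟨T, hw⟩ := exists_eq_supportedIdeal w.1
    refine ⟨T, ⟨?_, ?_⟩, hw.symm⟩
    · exact Set.subset_compl_iff_disjoint_left.2 ((EG_adj_iff_disjoint hv hw).1 hvw)
    · exact (AnnVertex.nonempty_of_eq_supportedIdeal hw).ne_empty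
  · rintro ⟨T, ⟨hTS, hT⟩, rfl⟩
    have hTu : T ≠ Set.univ := fun h => (h ▸ hTS) (Set.mem_univ hS.some) hS.some_mem
    refine ⟨⟨supportedIdeal F T, supportedIdeal_isAnnVertex_iff.2
      ⟨Set.nonempty_iff_ne_empty.2 hT, hTu⟩⟩, ?_, rfl⟩
    exact (EG_adj_iff_disjoint hv rfl).2 (Set.subset_compl_iff_disjoint_left.1 hTS)

theorem ncard_neighborSet_EG (hv : v.1 = supportedIdeal F S) :
    ((EG (Π i, F i)).neighborSet v).ncard = 2 ^ (Nat.card ι - S.ncard) - 1 := by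
  have hval : Function.Injective fun w : AnnVertex (Π i, F i) => w.1 := fun _ _ => Subtype.ext
  rw [← Set.ncard_image_of_injective _ hval, image_neighborSet_EG hv,
    Set.ncard_image_of_injective _ supportedIdeal_injective,
    Set.ncard_sdiff_singleton_of_mem (Set.mem_powerset (Set.empty_subset _)), Set.ncard_powerset,
    Set.ncard_compl]

theorem ncard_neighborSet_EG_le (v : AnnVertex (Π i, F i)) :
    ((EG (Π i, F i)).neighborSet v).ncard ≤ 2 ^ (Nat.card ι - 1) - 1 := by
  obtain ⟨S, hv⟩ := exists_eq_supportedIdeal v.1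
  have hS := (AnnVertex.nonempty_of_eq_supportedIdeal hv).ncard_pos
  rw [ncard_neighborSet_EG hv, two_pow_sub_one_le_two_pow_sub_one_iff]
  omega

theorem ncard_neighborSet_EG_eq_iff [DecidableEq ι] (v : AnnVertex (Π i, F i)) :
    ((EG (Π i, F i)).neighborSet v).ncard = 2 ^ (Nat.card ι - 1) - 1 ↔
      ∃ i, v.1 = Ideal.span {Pi.single i 1} := by
  obtain ⟨S, hv⟩ := exists_eq_supportedIdeal v.1
  have hS := (AnnVertex.nonempty_of_eq_supportedIdeal hv).ncard_pos
  have hSι : S.ncard ≤ Nat.card ι := Set.ncard_le_card S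
  simp only [ncard_neighborSet_EG hv, hv, ← supportedIdeal_singleton,
    supportedIdeal_injective.eq_iff, ← Set.ncard_eq_one]
  rw [le_antisymm_iff, two_pow_sub_one_le_two_pow_sub_one_iff,
    two_pow_sub_one_le_two_pow_sub_one_iff]
  omega

end Graph

end ProductOfFields

theorem maxDegree_in_product_of_fields {n : ℕ} (hn : 3 ≤ n)
    (F : Fin n → Type*) [∀ i, Field (F i)] :
    (∀ i : Fin n, ∃ v : AnnVertex (∀ i, F i), v.1 = Ideal.span {Pi.single i 1}) ∧
    (∀ v : AnnVertex (∀ i, F i),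
      ((EG (∀ i, F i)).neighborSet v).ncard ≤ 2 ^ (n - 1) - 1) ∧
    (∀ v : AnnVertex (∀ i, F i),
      ((EG (∀ i, F i)).neighborSet v).ncard = 2 ^ (n - 1) - 1 ↔
        ∃ i : Fin n, v.1 = Ideal.span {Pi.single i 1}) := by
  refine ⟨fun i => ?_, by simpa using ncard_neighborSet_EG_le (F := F),
    by simpa using ncard_neighborSet_EG_eq_iff (F := F)⟩
  have hi : ({i} : Set (Fin n)) ≠ Set.univ := fun h => by
    have := congrArg Set.ncard h
    simp only [Set.ncard_singleton, Set.ncard_univ, Nat.card_eq_fintype_card, Fintype.card_fin] at this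
    omega
  exact ⟨⟨_, supportedIdeal_isAnnVertex_iff.2 ⟨Set.singleton_nonempty i, hi⟩⟩,
    Pi.supportedIdeal_singleton i⟩
end

section
/- Let R = F_1 × ⋯ × F_n be a direct product of fields with n ≥ 2. Then the essential annihilating-ideal graph EG(R) is Class 1, i.e., its edge chromatic number equals its maximum degree Δ(EG(R)). -/
/-- `G` has a proper edge coloring with `k` colors. -/
def HasProperEdgeColoring {V : Type*} (G : SimpleGraph V) (k : ℕ) : Prop :=
  ∃ c : V → V → Fin k,
    (∀ a b, G.Adj a b → c a b = c b a) ∧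
    (∀ a b b', G.Adj a b → G.Adj a b' → b ≠ b' → c a b ≠ c a b')


/-!
Ideals of `∏ i, F i` correspond, as a lattice, to subsets of the index set, and because the ring is
reduced, `Ann(IJ)` is essential iff `IJ = 0` iff `I ⊓ J = ⊥`. So `EG(R)` is the disjointness graph
on the nonempty proper subsets of `Fin n`, where `S` has `2 ^ (n - |S|) - 1` neighbours and
`Δ = 2 ^ (n - 1) - 1`. Colour the edge `{S, T}` by the unordered partition `{K, Kᶜ}`, where
`K = S ∪ T`, or `K = S` when `S ∪ T` is everything; there are exactly `2 ^ (n - 1) - 1` such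
partitions. At `S` the colour determines `K` as the part containing `S`, and then `T` is `K \ S`,
or `Sᶜ` when `K = S`, so the colouring is proper.
-/

theorem isEssentialIdeal_annihilator_iff {R : Type*} [CommRing R] [IsReduced R] {K : Ideal R} :
    IsEssentialIdeal R (Submodule.annihilator K) ↔ K = ⊥ := by
  refine ⟨fun h => by_contra fun hK => h K hK ?_, fun h J hJ => ?_⟩
  · rw [← Ideal.pow_eq_bot two_ne_zero, pow_two, eq_bot_iff, ← Submodule.annihilator_mul K]
    exact Ideal.mul_mono inf_le_left inf_le_right
  · rwa [h, Submodule.annihilator_bot, top_inf_eq]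

theorem Ideal.mul_eq_bot_iff_disjoint {R : Type*} [CommRing R] [IsReduced R] {I J : Ideal R} :
    I * J = ⊥ ↔ Disjoint I J := by
  refine ⟨fun h => ?_, fun h => eq_bot_iff.2 (Ideal.mul_le_inf.trans h.le_bot)⟩
  rw [disjoint_iff, ← Ideal.pow_eq_bot two_ne_zero, pow_two, eq_bot_iff, ← h]
  exact Ideal.mul_mono inf_le_left inf_le_right

theorem EG.adj_iff_disjoint {R : Type*} [CommRing R] [IsReduced R] {I J : AnnVertex R} :
    (EG R).Adj I J ↔ Disjoint I.1 J.1 := by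
  refine ⟨fun h => ?_, fun h => ⟨?_, ?_⟩⟩
  · exact Ideal.mul_eq_bot_iff_disjoint.1 (isEssentialIdeal_annihilator_iff.1 h.2)
  · rintro rfl
    exact I.2.1 (disjoint_self.1 h)
  · exact isEssentialIdeal_annihilator_iff.2 (Ideal.mul_eq_bot_iff_disjoint.2 h)

section PiField

variable {ι : Type*} [Fintype ι] [DecidableEq ι] (F : ι → Type*) [∀ i, Field (F i)]

noncomputable def finsetOrderIsoIdealPi : Finset ι ≃o Ideal (∀ i, F i) :=
  RelIso.ofSurjective
    (OrderEmbedding.ofMapLEIff (fun S => Ideal.pi fun i => if i ∈ S then ⊤ else ⊥) fun S T => by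
      simp only [Ideal.pi_le_pi_iff, Pi.le_def, Finset.subset_iff]
      refine forall_congr' fun i => ?_
      split_ifs <;> simp_all)
    fun I => by
      refine ⟨Finset.univ.filter fun i => Ideal.piOrderIso I i = ⊤, ?_⟩
      conv_rhs => rw [← Ideal.piOrderIso.symm_apply_apply I]
      refine congrArg Ideal.pi (funext fun i => ?_)
      simp only [Finset.mem_filter, Finset.mem_univ, true_and]
      split_ifs with h
      · exact h.symm
      · exact ((Ideal.piOrderIso I i).eq_bot_or_top.resolve_right h).symm

variable {F}

theorem mem_finsetOrderIsoIdealPi {S : Finset ι} {x : ∀ i, F i} :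
    x ∈ finsetOrderIsoIdealPi F S ↔ ∀ i ∉ S, x i = 0 := by
  show x ∈ Ideal.pi _ ↔ _
  simp only [Ideal.mem_pi]
  refine forall_congr' fun i => ?_
  split_ifs with h <;> simp [h]

theorem annihilator_eq_bot_iff_eq_top {I : Ideal (∀ i, F i)} :
    Submodule.annihilator I = ⊥ ↔ I = ⊤ := by
  refine ⟨fun h => ?_, fun h => ?_⟩
  · obtain ⟨S, rfl⟩ := (finsetOrderIsoIdealPi F).surjective I
    rw [map_eq_top_iff, Finset.top_eq_univ, Finset.eq_univ_iff_forall]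
    intro i
    by_contra hi
    have hmem : (Pi.single i 1 : ∀ i, F i) ∈ Submodule.annihilator (finsetOrderIsoIdealPi F S) := by
      refine Submodule.mem_annihilator.2 fun x hx => funext fun j => ?_
      rcases eq_or_ne j i with rfl | hj
      · simp [mem_finsetOrderIsoIdealPi.1 hx j hi]
      · simp [hj]
    rw [h, Submodule.mem_bot] at hmem
    simpa using congrFun hmem i
  · subst h
    exact eq_bot_iff.2 fun x hx => by
      simpa using Submodule.mem_annihilator.1 hx 1 Submodule.mem_top

end PiField

def disjointnessGraph (α : Type*) [Lattice α] [BoundedOrder α] :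
    SimpleGraph {a : α // a ≠ ⊥ ∧ a ≠ ⊤} where
  Adj a b := Disjoint a.1 b.1
  symm := ⟨fun _ _ h => h.symm⟩
  loopless := ⟨fun a h => a.2.1 (disjoint_self.1 h)⟩

noncomputable def EG.piFieldIso {ι : Type*} [Fintype ι] [DecidableEq ι]
    (F : ι → Type*) [∀ i, Field (F i)] :
    EG (∀ i, F i) ≃g disjointnessGraph (Finset ι) where
  toEquiv := Equiv.subtypeEquiv (finsetOrderIsoIdealPi F).symm.toEquiv fun _ =>
    and_congr (map_eq_bot_iff (finsetOrderIsoIdealPi F).symm).not.symm <|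
      annihilator_eq_bot_iff_eq_top.not.trans
        (map_eq_top_iff (finsetOrderIsoIdealPi F).symm).not.symm
  map_rel_iff' :=
    (disjoint_map_orderIso_iff (finsetOrderIsoIdealPi F).symm).trans EG.adj_iff_disjoint.symm

theorem SimpleGraph.Iso.ncard_neighborSet {V W : Type*} {G : SimpleGraph V} {G' : SimpleGraph W}
    (f : G ≃g G') (v : V) : (G'.neighborSet (f v)).ncard = (G.neighborSet v).ncard := by
  rw [← Nat.card_coe_set_eq, ← Nat.card_coe_set_eq, Nat.card_congr (f.mapNeighborSet v)]

theorem HasProperEdgeColoring.comap {V W : Type*} {G : SimpleGraph V} {G' : SimpleGraph W} {k : ℕ}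
    (f : G ↪g G') (h : HasProperEdgeColoring G' k) : HasProperEdgeColoring G k := by
  obtain ⟨c, hsymm, hprop⟩ := h
  exact ⟨fun a b => c (f a) (f b), fun a b hab => hsymm _ _ (f.map_rel_iff.2 hab),
    fun a b b' h h' hne =>
      hprop _ _ _ (f.map_rel_iff.2 h) (f.map_rel_iff.2 h') (f.injective.ne hne)⟩

theorem HasProperEdgeColoring.of_injective {V β : Type*} {G : SimpleGraph V} {s : Finset β}
    (hs : s.Nonempty) (c : V → V → β) (hmem : ∀ a b, G.Adj a b → c a b ∈ s)
    (hsymm : ∀ a b, G.Adj a b → c a b = c b a)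
    (hinj : ∀ a b b', G.Adj a b → G.Adj a b' → c a b = c a b' → b = b') :
    HasProperEdgeColoring G s.card := by
  classical
  let r : β → s := fun x => if h : x ∈ s then ⟨x, h⟩ else ⟨_, hs.choose_spec⟩
  have hr : ∀ a b (h : G.Adj a b), r (c a b) = ⟨c a b, hmem a b h⟩ :=
    fun a b h => dif_pos (hmem a b h)
  refine ⟨fun a b => s.equivFin (r (c a b)), fun a b h => ?_, fun a b b' h h' hne heq => ?_⟩
  · dsimp only
    rw [hr a b h, hr b a h.symm]
    exact congrArg _ (Subtype.ext (hsymm a b h))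
  · dsimp only at heq
    rw [s.equivFin.apply_eq_iff_eq, hr a b h, hr a b' h', Subtype.mk.injEq] at heq
    exact hne (hinj a b b' h h' heq)

section FinsetDisjointnessGraph

variable {α : Type*} [Fintype α] [DecidableEq α]

open Finset

theorem ncard_neighborSet_disjointnessGraph (S : {S : Finset α // S ≠ ⊥ ∧ S ≠ ⊤}) :
    ((disjointnessGraph (Finset α)).neighborSet S).ncard = 2 ^ (Fintype.card α - #S.1) - 1 := by
  have himage : Subtype.val '' (disjointnessGraph (Finset α)).neighborSet S =
      ↑((S.1ᶜ).powerset.erase ∅) := by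
    ext T
    simp only [Set.mem_image, SimpleGraph.mem_neighborSet, Subtype.exists, exists_and_right,
      exists_eq_right, mem_coe, mem_erase, mem_powerset, disjointnessGraph]
    refine ⟨fun ⟨⟨hT, _⟩, hST⟩ => ⟨hT, le_compl_iff_disjoint_left.2 hST⟩,
      fun ⟨hT, hTS⟩ => ⟨⟨hT, fun h => S.2.1 ?_⟩, le_compl_iff_disjoint_left.1 hTS⟩⟩
    rw [h, top_le_iff, compl_eq_top] at hTS
    exact hTS
  rw [← Set.ncard_image_of_injective _ Subtype.val_injective, himage, Set.ncard_coe_finset,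
    card_erase_of_mem (empty_mem_powerset _), card_powerset, card_compl]

theorem ncard_neighborSet_disjointnessGraph_le (S : {S : Finset α // S ≠ ⊥ ∧ S ≠ ⊤}) :
    ((disjointnessGraph (Finset α)).neighborSet S).ncard ≤ 2 ^ (Fintype.card α - 1) - 1 := by
  have := card_pos.2 (nonempty_iff_ne_empty.2 S.2.1)
  rw [ncard_neighborSet_disjointnessGraph]
  exact Nat.sub_le_sub_right (Nat.pow_le_pow_right two_pos (by omega)) 1

theorem exists_ncard_neighborSet_disjointnessGraph_eq [Nontrivial α] :
    ∃ S : {S : Finset α // S ≠ ⊥ ∧ S ≠ ⊤},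
      ((disjointnessGraph (Finset α)).neighborSet S).ncard = 2 ^ (Fintype.card α - 1) - 1 := by
  obtain ⟨z, w, hzw⟩ := exists_pair_ne α
  refine ⟨⟨{z}, singleton_ne_empty z, fun h => hzw.symm ?_⟩, ?_⟩
  · exact mem_singleton.1 (h ▸ mem_univ w)
  · rw [ncard_neighborSet_disjointnessGraph, card_singleton]

def edgeKey (S T : Finset α) : Finset α :=
  if S ∪ T = univ then S else S ∪ T

/-- Represents the unordered partition `{K, Kᶜ}`, the colour of an edge with key `K`. -/
def repAvoiding (z : α) (K : Finset α) : Finset α :=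
  if z ∈ K then Kᶜ else K

theorem repAvoiding_compl (z : α) (K : Finset α) : repAvoiding z Kᶜ = repAvoiding z K := by
  by_cases h : z ∈ K <;> simp [repAvoiding, h]

theorem eq_or_eq_compl_of_repAvoiding_eq {z : α} {K K' : Finset α}
    (h : repAvoiding z K = repAvoiding z K') : K = K' ∨ K = K'ᶜ := by
  unfold repAvoiding at h
  split_ifs at h
  · exact Or.inl (compl_injective h)
  · exact Or.inr (compl_eq_comm.1 h).symm
  · exact Or.inr h
  · exact Or.inl h

theorem repAvoiding_mem_powerset_erase_empty {z : α} {K : Finset α} (h₀ : K ≠ ∅)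
    (h₁ : K ≠ univ) : repAvoiding z K ∈ (univ.erase z).powerset.erase ∅ := by
  unfold repAvoiding
  split_ifs with h <;> simp [subset_iff, *]
  rintro x hx rfl
  exact hx h

theorem subset_edgeKey (S T : Finset α) : S ⊆ edgeKey S T := by
  unfold edgeKey
  split_ifs
  exacts [subset_rfl, subset_union_left]

theorem edgeKey_ne_empty {S : Finset α} (T : Finset α) (hS : S ≠ ∅) : edgeKey S T ≠ ∅ :=
  fun h => hS (subset_empty.1 (h ▸ subset_edgeKey S T))

theorem edgeKey_ne_univ {S : Finset α} (T : Finset α) (hS : S ≠ univ) : edgeKey S T ≠ univ := by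
  unfold edgeKey
  split_ifs with hu
  exacts [hS, hu]

theorem edgeKey_comm_or_compl {S T : Finset α} (h : Disjoint S T) :
    edgeKey T S = edgeKey S T ∨ edgeKey T S = (edgeKey S T)ᶜ := by
  unfold edgeKey
  rw [union_comm T S]
  split_ifs with hu
  · exact Or.inr (IsCompl.compl_eq ⟨h, codisjoint_iff.2 hu⟩).symm
  · exact Or.inl rfl

theorem edgeKey_injective {S T T' : Finset α} (hT : Disjoint S T) (hT' : Disjoint S T')
    (hTn : T.Nonempty) (hTn' : T'.Nonempty) (h : edgeKey S T = edgeKey S T') : T = T' := by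
  unfold edgeKey at h
  split_ifs at h with hu hu'
  · rw [← IsCompl.compl_eq ⟨hT, codisjoint_iff.2 hu⟩, IsCompl.compl_eq ⟨hT', codisjoint_iff.2 hu'⟩]
  · exact absurd (hT'.symm.eq_bot_of_le (union_eq_left.1 h.symm)) hTn'.ne_empty
  · exact absurd (hT.symm.eq_bot_of_le (union_eq_left.1 h)) hTn.ne_empty
  · rw [← union_sdiff_cancel_left hT, h, union_sdiff_cancel_left hT']

theorem hasProperEdgeColoring_disjointnessGraph [Nontrivial α] :
    HasProperEdgeColoring (disjointnessGraph (Finset α)) (2 ^ (Fintype.card α - 1) - 1) := by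
  obtain ⟨z, w, hzw⟩ := exists_pair_ne α
  have hcard : #((univ.erase z).powerset.erase ∅) = 2 ^ (Fintype.card α - 1) - 1 := by
    rw [card_erase_of_mem (empty_mem_powerset _), card_powerset, card_erase_of_mem (mem_univ z),
      card_univ]
  rw [← hcard]
  refine HasProperEdgeColoring.of_injective ⟨{w}, by simpa using hzw.symm⟩
    (fun S T => repAvoiding z (edgeKey S.1 T.1)) (fun S T _ => ?_) (fun S T h => ?_)
    (fun S T T' h h' hc => ?_)
  · exact repAvoiding_mem_powerset_erase_empty (edgeKey_ne_empty _ S.2.1) (edgeKey_ne_univ _ S.2.2)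
  · rcases edgeKey_comm_or_compl h with hk | hk <;> simp only [hk, repAvoiding_compl]
  · have hkey : edgeKey S.1 T.1 = edgeKey S.1 T'.1 :=
      (eq_or_eq_compl_of_repAvoiding_eq hc).resolve_right fun hk => S.2.1 <|
        (le_compl_iff_disjoint_right.1 (hk ▸ subset_edgeKey S.1 T.1)).eq_bot_of_le
          (subset_edgeKey S.1 T'.1)
    exact Subtype.ext (edgeKey_injective h h' (nonempty_iff_ne_empty.2 T.2.1)
      (nonempty_iff_ne_empty.2 T'.2.1) hkey)

end FinsetDisjointnessGraph

theorem product_of_fields_class_one {n : ℕ} (hn : 2 ≤ n)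
    (F : Fin n → Type*) [∀ i, Field (F i)] :
    ∃ d : ℕ,
      (∀ v : AnnVertex (∀ i, F i), ((EG (∀ i, F i)).neighborSet v).ncard ≤ d) ∧
      (∃ v : AnnVertex (∀ i, F i), ((EG (∀ i, F i)).neighborSet v).ncard = d) ∧
      HasProperEdgeColoring (EG (∀ i, F i)) d := by
  have : Nontrivial (Fin n) := Fin.nontrivial_iff_two_le.2 hn
  let φ := EG.piFieldIso F
  obtain ⟨S, hS⟩ := exists_ncard_neighborSet_disjointnessGraph_eq (α := Fin n)
  refine ⟨2 ^ (Fintype.card (Fin n) - 1) - 1, fun v => ?_, ⟨φ.symm S, ?_⟩,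
    hasProperEdgeColoring_disjointnessGraph.comap φ.toEmbedding⟩
  · rw [← φ.ncard_neighborSet]
    exact ncard_neighborSet_disjointnessGraph_le _
  · rw [← φ.ncard_neighborSet, φ.apply_symm_apply, hS]
end
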